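/- arXiv:2604.02267 — 10 statements merged into one kernel-verified Lean document; each statement's English description precedes it below -/
import Mathlib

section
/- Let S=(1,s_2,s_3,...) be a packing sequence with first entry 1. For every path P_n on n vertices v_1,...,v_n, there exists an S-packing coloring of P_n using exactly χ_S(P_n) colors in which every vertex v_i with odd index i receives color 1. -/
open SimpleGraph

/-- `IsSPackingColoring G s φ` : `φ` is an `S`-packing coloring of `G` with colors
`Fin k`, where the value `s i` represents the entry `s_{i+1}` of the packing
sequence `S = (s_1, s_2, …)` (0-indexed encoding), and the color `j : Fin k`
represents color `j+1`: two distinct vertices sharing a color `i` (1-indexed)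
must be at distance greater than `s_i`. -/
def IsSPackingColoring {V : Type*} (G : SimpleGraph V) (s : ℕ → ℕ) {k : ℕ}
    (φ : V → Fin k) : Prop :=
  ∀ u v : V, u ≠ v → φ u = φ v → (s (φ u) : ℕ∞) < G.edist u v

/-- The `S`-packing chromatic number of `G`: the least `k` admitting an
`S`-packing `k`-coloring. -/
noncomputable def SPackingChromatic {V : Type*} (G : SimpleGraph V) (s : ℕ → ℕ) : ℕ :=
  sInf {k | ∃ φ : V → Fin k, IsSPackingColoring G s φ}

/-- `G` is `χ_S`-critical: every proper subgraph has a strictly smaller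
`S`-packing chromatic number. -/
def SCritical {V : Type*} (G : SimpleGraph V) (s : ℕ → ℕ) : Prop :=
  ∀ H : G.Subgraph, H ≠ ⊤ → SPackingChromatic H.coe s < SPackingChromatic G s

/-- `G` is `χ_S`-vertex-critical: deleting any vertex strictly decreases the
`S`-packing chromatic number. -/
def SVertexCritical {V : Type*} (G : SimpleGraph V) (s : ℕ → ℕ) : Prop :=
  ∀ v : V, SPackingChromatic (G.induce {u | u ≠ v}) s < SPackingChromatic G s


def pfun (f : ℕ → ℕ) : ℕ → ℕ
  | 0 => if f 0 = 0 then 1 else 0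
  | t+1 => if f (pfun f t + 1) = 0 then pfun f t + 2 else pfun f t + 1

lemma pfun_zero_eq (f : ℕ → ℕ) : pfun f 0 = if f 0 = 0 then 1 else 0 := rfl

lemma pfun_succ_eq (f : ℕ → ℕ) (t : ℕ) :
    pfun f (t+1) = if f (pfun f t + 1) = 0 then pfun f t + 2 else pfun f t + 1 := rfl

lemma pfun_nz (f : ℕ → ℕ) (hadj : ∀ i, f i ≠ 0 ∨ f (i+1) ≠ 0) : ∀ t, f (pfun f t) ≠ 0 := by
  intro t
  induction t with
  | zero =>
    unfold pfun
    split_ifs with h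
    · rcases hadj 0 with h' | h'
      · exact absurd h h'
      · exact h'
    · exact h
  | succ t ih =>
    unfold pfun
    split_ifs with h
    · rcases hadj (pfun f t + 1) with h' | h'
      · exact absurd h h'
      · exact h'
    · exact h

lemma pfun_succ (f : ℕ → ℕ) (t : ℕ) :
    pfun f t < pfun f (t+1) ∧ pfun f (t+1) ≤ pfun f t + 2 := by
  rw [pfun_succ_eq]
  split_ifs <;> omega

lemma pfun_le (f : ℕ → ℕ) : ∀ t, pfun f t ≤ 2*t + 1 := by
  intro t
  induction t with
  | zero => rw [pfun_zero_eq]; split_ifs <;> omega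
  | succ t ih => have := pfun_succ f t; omega

lemma pfun_add (f : ℕ → ℕ) (t : ℕ) : ∀ d, pfun f (t+d) ≤ pfun f t + 2*d ∧
    (0 < d → pfun f t < pfun f (t+d)) := by
  intro d
  induction d with
  | zero => simp
  | succ d ih =>
    obtain ⟨ih1, ih2⟩ := ih
    have h1 := pfun_succ f (t+d)
    have he : t + (d+1) = (t+d) + 1 := by omega
    rw [he]
    rcases Nat.eq_zero_or_pos d with rfl | hd
    · simp only [Nat.add_zero] at h1 ⊢
      omega
    · have := ih2 hd
      omega

lemma pg_walk_ge {n : ℕ} {a b : Fin n} (w : (pathGraph n).Walk a b) :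
    (b:ℕ) - a ≤ w.length ∧ (a:ℕ) - b ≤ w.length := by
  induction w with
  | nil => simp
  | @cons u x b h p ih =>
    simp only [SimpleGraph.Walk.length_cons]
    rcases pathGraph_adj.mp h with h' | h' <;> omega

lemma le_pg_edist {n : ℕ} (a b : Fin n) :
    (((b:ℕ) - (a:ℕ) : ℕ) : ℕ∞) ≤ (pathGraph n).edist a b := by
  rw [SimpleGraph.edist_eq_sInf]
  refine le_sInf ?_
  rintro x ⟨w, rfl⟩
  exact Nat.cast_le.mpr (pg_walk_ge w).1

lemma pg_edist_le {n : ℕ} (a b : Fin n) (h : (a:ℕ) ≤ (b:ℕ)) :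
    (pathGraph n).edist a b ≤ (((b:ℕ) - (a:ℕ) : ℕ) : ℕ∞) := by
  have key : ∀ d (a b : Fin n), (a:ℕ) + d = (b:ℕ) → (pathGraph n).edist a b ≤ (d : ℕ∞) := by
    intro d
    induction d with
    | zero =>
      intro a b hab
      have : a = b := Fin.ext (by omega)
      subst this
      simp [SimpleGraph.edist_eq_zero_iff.mpr rfl]
    | succ d ih =>
      intro a b hab
      have h1 : (a:ℕ) + 1 < n := by have := b.isLt; omega
      have hadj : (pathGraph n).Adj a ⟨(a:ℕ)+1, h1⟩ := pathGraph_adj.mpr (Or.inl rfl)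
      have h2 := ih ⟨(a:ℕ)+1, h1⟩ b (by simp; omega)
      calc (pathGraph n).edist a b
          ≤ (pathGraph n).edist a ⟨(a:ℕ)+1, h1⟩ + (pathGraph n).edist ⟨(a:ℕ)+1, h1⟩ b :=
            SimpleGraph.edist_triangle
        _ ≤ 1 + (d : ℕ∞) := add_le_add (le_of_eq (edist_eq_one_iff_adj.mpr hadj)) h2
        _ = ((d+1 : ℕ) : ℕ∞) := by push_cast; rw [add_comm]
  have := key ((b:ℕ) - (a:ℕ)) a b (by omega)
  exact this

theorem stmt1 (s : ℕ → ℕ) (hmono : Monotone s) (hpos : ∀ i, 1 ≤ s i)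
    (h1 : s 0 = 1) (n : ℕ) :
    ∃ φ : Fin n → Fin (SPackingChromatic (pathGraph n) s),
      IsSPackingColoring (pathGraph n) s φ ∧
      ∀ i : Fin n, Odd ((i : ℕ) + 1) → (φ i : ℕ) = 0 := by
  classical
  set k := SPackingChromatic (pathGraph n) s with hkdef
  obtain ⟨φ, hφ⟩ : ∃ φ : Fin n → Fin k, IsSPackingColoring (pathGraph n) s φ :=
    Nat.sInf_mem (⟨n, fun i => i, fun u v h h' => absurd h' h⟩ :
      Set.Nonempty {k | ∃ φ : Fin n → Fin k, IsSPackingColoring (pathGraph n) s φ})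
  rcases Nat.eq_zero_or_pos n with hn | hn
  · exact ⟨φ, hφ, fun i _ => absurd i.isLt (by omega)⟩
  have hk : 0 < k := Fin.pos_iff_nonempty.mpr ⟨φ ⟨0, hn⟩⟩
  have key : ∀ a b : Fin n, (a:ℕ) < (b:ℕ) → φ a = φ b →
      (s (φ a) : ℕ) < (b:ℕ) - (a:ℕ) := by
    intro a b hab heq
    have hne : a ≠ b := fun h => by rw [h] at hab; omega
    have h2 := hφ a b hne heq
    have h3 := pg_edist_le a b (le_of_lt hab)
    have h4 : ((s (φ a) : ℕ) : ℕ∞) < (((b:ℕ) - (a:ℕ) : ℕ) : ℕ∞) := lt_of_lt_of_le h2 h3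
    exact_mod_cast h4
  set f : ℕ → ℕ := fun i => if h : i < n then (φ ⟨i, h⟩ : ℕ) else 1 with hf
  have hfn : ∀ i (h : i < n), f i = (φ ⟨i, h⟩ : ℕ) := fun i h => dif_pos h
  have hadj : ∀ i, f i ≠ 0 ∨ f (i+1) ≠ 0 := by
    intro i
    by_cases h2 : i + 1 < n
    · have h1' : i < n := by omega
      by_cases hz : (φ ⟨i, h1'⟩ : ℕ) = 0
      · right
        rw [hfn (i+1) h2]
        intro hz2
        have heq : φ ⟨i, h1'⟩ = φ ⟨i+1, h2⟩ := Fin.ext (by omega)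
        have hlt := key ⟨i, h1'⟩ ⟨i+1, h2⟩ (by simp) heq
        rw [hz] at hlt
        rw [h1] at hlt
        simp only [Fin.val_mk] at hlt
        omega
      · left; rw [hfn i h1']; exact hz
    · right; rw [hf]; simp [h2]
  have hnz : ∀ t, f (pfun f t) ≠ 0 := pfun_nz f hadj
  have hplt : ∀ i : ℕ, i < n → ¬ Even i → pfun f (i/2) < n := by
    intro i hi hodd
    have h2 := pfun_le f (i/2)
    have h3 : i % 2 = 1 := Nat.odd_iff.mp (Nat.not_even_iff_odd.mp hodd)
    omega
  have hmod : ∀ i : ℕ, i < n → ¬ Even i → pfun f (i/2) % n = pfun f (i/2) :=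
    fun i hi ho => Nat.mod_eq_of_lt (hplt i hi ho)
  let ψ : Fin n → Fin k := fun i =>
    if Even (i:ℕ) then ⟨0, hk⟩ else φ ⟨pfun f ((i:ℕ)/2) % n, Nat.mod_lt _ hn⟩
  have hψ_even : ∀ i : Fin n, Even (i:ℕ) → ψ i = ⟨0, hk⟩ := fun i h => if_pos h
  have hψ_odd : ∀ (i : Fin n) (h : ¬ Even (i:ℕ)),
      ψ i = φ ⟨pfun f ((i:ℕ)/2), hplt (i:ℕ) i.isLt h⟩ := by
    intro i h
    have h0 : ψ i = φ ⟨pfun f ((i:ℕ)/2) % n, Nat.mod_lt _ hn⟩ := if_neg h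
    rw [h0]
    congr 1
    exact Fin.ext (hmod _ i.isLt h)
  have hψ_odd_nz : ∀ (i : Fin n) (h : ¬ Even (i:ℕ)), (ψ i : ℕ) ≠ 0 := by
    intro i h
    rw [hψ_odd i h]
    have h2 := hnz ((i:ℕ)/2)
    rwa [hfn _ (hplt (i:ℕ) i.isLt h)] at h2
  have main : ∀ u v : Fin n, (u:ℕ) < (v:ℕ) → ψ u = ψ v →
      ((s ((ψ u : ℕ)) : ℕ) : ℕ∞) < (pathGraph n).edist u v := by
    intro u v huv heq
    refine lt_of_lt_of_le ?_ (le_pg_edist u v)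
    rw [Nat.cast_lt]
    by_cases hu : Even (u:ℕ) <;> by_cases hv : Even (v:ℕ)
    · rw [hψ_even u hu]
      have hz : ((⟨0, hk⟩ : Fin k) : ℕ) = 0 := rfl
      rw [hz, h1]
      obtain ⟨a, ha⟩ := hu
      obtain ⟨b, hb⟩ := hv
      omega
    · exfalso
      have h2 := hψ_odd_nz v hv
      rw [← heq, hψ_even u hu] at h2
      exact h2 rfl
    · exfalso
      have h2 := hψ_odd_nz u hu
      rw [heq, hψ_even v hv] at h2
      exact h2 rfl
    · rw [hψ_odd u hu] at heq ⊢
      rw [hψ_odd v hv] at heq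
      have hou : (u:ℕ) % 2 = 1 := Nat.odd_iff.mp (Nat.not_even_iff_odd.mp hu)
      have hov : (v:ℕ) % 2 = 1 := Nat.odd_iff.mp (Nat.not_even_iff_odd.mp hv)
      have hab : (u:ℕ)/2 < (v:ℕ)/2 := by omega
      have hpab := pfun_add f ((u:ℕ)/2) ((v:ℕ)/2 - (u:ℕ)/2)
      have hrw : (u:ℕ)/2 + ((v:ℕ)/2 - (u:ℕ)/2) = (v:ℕ)/2 := by omega
      rw [hrw] at hpab
      have hplt2 : pfun f ((u:ℕ)/2) < pfun f ((v:ℕ)/2) := hpab.2 (by omega)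
      have hkey := key ⟨pfun f ((u:ℕ)/2), hplt (u:ℕ) u.isLt hu⟩
        ⟨pfun f ((v:ℕ)/2), hplt (v:ℕ) v.isLt hv⟩ hplt2 heq
      have hub := hpab.1
      simp only [Fin.val_mk] at hkey
      omega
  refine ⟨ψ, ?_, ?_⟩
  · intro u v hneq heq
    rcases lt_trichotomy (u:ℕ) (v:ℕ) with h | h | h
    · exact main u v h heq
    · exact absurd (Fin.ext h) hneq
    · rw [SimpleGraph.edist_comm]
      have h2 := main v u h heq.symm
      rwa [← heq] at h2
  · intro i hodd
    have he : Even (i:ℕ) := by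
      have h2 := Nat.odd_iff.mp hodd
      exact Nat.even_iff.mpr (by omega)
    rw [hψ_even i he]
end

section
/- Let S=(1,s_2,s_3,...) be a packing sequence and define S'=(s_1',s_2',...) by s_i' = ⌊s_{i+1}/2⌋ for every i ≥ 1. Then for every n ≥ 2, χ_S(P_n) = χ_{S'}(P_{⌊n/2⌋}) + 1. -/
/-!
Colour `1` of `S` has `s₁ = 1`, so it may be used exactly on the vertices of an independent set.
Given an `S'`-packing colouring of `P_{⌊n/2⌋}`, give all even vertices of `P_n` colour `1` and
vertex `2j + 1` the colour of `j` shifted up by one: distances double, and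
`d > ⌊s_{i+1}/2⌋` implies `2d > s_{i+1}`. Conversely, in an `S`-packing colouring of `P_n` the
vertices not coloured `1` leave gaps of at most one vertex, so their first `⌊n/2⌋` members,
with colours shifted down, span distances at most twice their index distance, and
`2d > s_{i+1}` gives `d > ⌊s_{i+1}/2⌋`.
-/

open SimpleGraph

section PathGraph

variable {n : ℕ}

lemma pathGraph_walk_length_ge {u v : Fin n} (p : (pathGraph n).Walk u v) :
    (v : ℕ) ≤ u + p.length := by
  induction p with
  | nil => simp
  | cons h _ ih =>
    rw [pathGraph_adj] at h
    rw [Walk.length_cons]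
    omega

lemma pathGraph_edist_le_of_add_eq {u v : Fin n} (d : ℕ) (h : (u : ℕ) + d = v) :
    (pathGraph n).edist u v ≤ d := by
  induction d generalizing v with
  | zero => simp [Fin.ext (h.symm.trans (add_zero _)).symm]
  | succ d ih =>
    let w : Fin n := ⟨u + d, by omega⟩
    have hwv : (pathGraph n).Adj w v := pathGraph_adj.2 (Or.inl (by simp [w]; omega))
    calc (pathGraph n).edist u v ≤ (pathGraph n).edist u w + (pathGraph n).edist w v :=
          SimpleGraph.edist_triangle
      _ ≤ d + 1 := add_le_add (ih rfl) (edist_eq_one_iff_adj.2 hwv).le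
      _ = (d + 1 : ℕ) := by push_cast; rfl

lemma pathGraph_edist_of_le {u v : Fin n} (h : u ≤ v) :
    (pathGraph n).edist u v = ((v - u : ℕ) : ℕ∞) := by
  refine le_antisymm (pathGraph_edist_le_of_add_eq _ (by omega)) (le_iInf fun p => ?_)
  have := pathGraph_walk_length_ge p
  exact_mod_cast (by omega : (v : ℕ) - u ≤ p.length)

lemma isSPackingColoring_pathGraph_iff {s : ℕ → ℕ} {k : ℕ} {φ : Fin n → Fin k} :
    IsSPackingColoring (pathGraph n) s φ ↔
      ∀ u v : Fin n, u < v → φ u = φ v → s (φ u) < (v : ℕ) - u := by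
  constructor
  · intro hφ u v huv heq
    have := hφ u v huv.ne heq
    rw [pathGraph_edist_of_le huv.le] at this
    exact_mod_cast this
  · intro hφ u v hne heq
    rcases hne.lt_or_gt with huv | hvu
    · rw [pathGraph_edist_of_le huv.le]
      exact_mod_cast hφ u v huv heq
    · rw [edist_comm, pathGraph_edist_of_le hvu.le, heq]
      exact_mod_cast hφ v u hvu heq.symm

end PathGraph

section SPackingChromatic

variable {V : Type*} {G : SimpleGraph V} {s : ℕ → ℕ}

lemma isSPackingColoring_of_injective {k : ℕ} {φ : V → Fin k} (hφ : Function.Injective φ) :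
    IsSPackingColoring G s φ :=
  fun _ _ huv heq => absurd (hφ heq) huv

lemma IsSPackingColoring.sPackingChromatic_le {k : ℕ} {φ : V → Fin k}
    (hφ : IsSPackingColoring G s φ) : SPackingChromatic G s ≤ k :=
  Nat.sInf_le ⟨φ, hφ⟩

lemma exists_isSPackingColoring_sPackingChromatic [Finite V] :
    ∃ φ : V → Fin (SPackingChromatic G s), IsSPackingColoring G s φ :=
  Nat.sInf_mem (s := {k | ∃ φ : V → Fin k, IsSPackingColoring G s φ})
    ⟨Nat.card V, Finite.equivFin V, isSPackingColoring_of_injective (Finite.equivFin V).injective⟩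

lemma sPackingChromatic_pos [Finite V] [Nonempty V] : 0 < SPackingChromatic G s := by
  obtain ⟨φ, -⟩ := exists_isSPackingColoring_sPackingChromatic (G := G) (s := s)
  exact (φ (Classical.arbitrary V)).pos

end SPackingChromatic

section NthOfNoTwoConsecutiveGaps

open Nat

variable {p : ℕ → Prop} (hp : ∀ i, p i ∨ p (i + 1))
include hp

lemma infinite_setOf_of_or_succ : {i | p i}.Infinite :=
  Set.infinite_of_forall_exists_gt fun a =>
    (hp (a + 1)).elim (fun h => ⟨a + 1, h, by omega⟩) (fun h => ⟨a + 2, h, by omega⟩)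

lemma nth_zero_le_one_of_or_succ : nth p 0 ≤ 1 := by
  rw [nth_zero]
  rcases hp 0 with h | h
  · exact (Nat.sInf_le h).trans zero_le_one
  · exact Nat.sInf_le h

lemma nth_succ_le_add_two_of_or_succ (j : ℕ) : nth p (j + 1) ≤ nth p j + 2 := by
  by_contra! h
  rcases hp (nth p j + 1) with h' | h'
  · have := le_nth_of_lt_nth_succ (k := j) (by omega) h'
    omega
  · have := le_nth_of_lt_nth_succ (k := j) (by omega) h'
    omega

lemma nth_add_le_of_or_succ (i d : ℕ) : nth p (i + d) ≤ nth p i + 2 * d := by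
  induction d with
  | zero => simp
  | succ d ih =>
    have := nth_succ_le_add_two_of_or_succ hp (i + d)
    rw [← add_assoc]
    omega

end NthOfNoTwoConsecutiveGaps

section PathGraphHalf

variable {s : ℕ → ℕ} {n k : ℕ}

-- Stated for all `i : ℕ`, vacuously beyond the path, so that it feeds `Nat.nth`.
lemma IsSPackingColoring.pathGraph_ne_zero_or_succ (hs : 1 ≤ s 0) {φ : Fin n → Fin (k + 1)}
    (hφ : IsSPackingColoring (pathGraph n) s φ) (i : ℕ) :
    (∀ h : i < n, φ ⟨i, h⟩ ≠ 0) ∨ ∀ h : i + 1 < n, φ ⟨i + 1, h⟩ ≠ 0 := by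
  refine or_iff_not_imp_left.2 fun hnp hi' h₀' => ?_
  obtain ⟨hi, h₀⟩ : ∃ h : i < n, φ ⟨i, h⟩ = 0 := by simpa using hnp
  have := isSPackingColoring_pathGraph_iff.1 hφ ⟨i, hi⟩ ⟨i + 1, hi'⟩
    (Fin.mk_lt_mk.2 (Nat.lt_succ_self i)) (h₀.trans h₀'.symm)
  simp only [h₀, Fin.val_zero, add_tsub_cancel_left] at this
  exact this.not_ge hs

lemma exists_isSPackingColoring_pathGraph_of_half (hs : s 0 ≤ 1) {ψ : Fin (n / 2) → Fin k}
    (hψ : IsSPackingColoring (pathGraph (n / 2)) (fun i => s (i + 1) / 2) ψ) :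
    ∃ φ : Fin n → Fin (k + 1), IsSPackingColoring (pathGraph n) s φ := by
  rw [isSPackingColoring_pathGraph_iff] at hψ
  refine ⟨fun v => if h : (v : ℕ) % 2 = 1 then (ψ ⟨v / 2, by omega⟩).succ else 0,
    isSPackingColoring_pathGraph_iff.2 fun u v huv heq => ?_⟩
  have huv' : (u : ℕ) < v := huv
  by_cases hu : (u : ℕ) % 2 = 1 <;> by_cases hv : (v : ℕ) % 2 = 1 <;>
    simp only [hu, hv, reduceDIte, Fin.succ_inj] at heq ⊢
  · have := hψ ⟨u / 2, by omega⟩ ⟨v / 2, by omega⟩ (Fin.mk_lt_mk.2 (by omega)) heq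
    simp only [Fin.val_succ] at this ⊢
    omega
  · exact absurd heq (Fin.succ_ne_zero _)
  · exact absurd heq.symm (Fin.succ_ne_zero _)
  · simp only [Fin.val_zero]
    omega

lemma exists_isSPackingColoring_half_of_pathGraph (hs : 1 ≤ s 0) {φ : Fin n → Fin (k + 1)}
    (hφ : IsSPackingColoring (pathGraph n) s φ) :
    ∃ ψ : Fin (n / 2) → Fin k,
      IsSPackingColoring (pathGraph (n / 2)) (fun i => s (i + 1) / 2) ψ := by
  let p : ℕ → Prop := fun i => ∀ h : i < n, φ ⟨i, h⟩ ≠ 0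
  have hp : ∀ i, p i ∨ p (i + 1) := hφ.pathGraph_ne_zero_or_succ hs
  rw [isSPackingColoring_pathGraph_iff] at hφ
  have hinf := infinite_setOf_of_or_succ hp
  have hlt (j : Fin (n / 2)) : Nat.nth p j < n := by
    have := zero_add (j : ℕ) ▸ nth_add_le_of_or_succ hp 0 j
    have := nth_zero_le_one_of_or_succ hp
    omega
  let g : Fin (n / 2) → Fin n := fun j => ⟨Nat.nth p j, hlt j⟩
  have hg (j : Fin (n / 2)) : φ (g j) ≠ 0 := Nat.nth_mem_of_infinite hinf j (hlt j)
  refine ⟨fun j => (φ (g j)).pred (hg j), isSPackingColoring_pathGraph_iff.2 ?_⟩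
  intro u v huv heq
  have huv' : (u : ℕ) < v := huv
  have heq' : φ (g u) = φ (g v) := Fin.pred_inj.1 heq
  have hgap : s (φ (g u)) < Nat.nth p v - Nat.nth p u :=
    hφ (g u) (g v) ((Nat.nth_lt_nth hinf).2 huv) heq'
  have hspread := Nat.add_sub_cancel' huv'.le ▸ nth_add_le_of_or_succ hp u (v - u)
  have hpos : (φ (g u) : ℕ) ≠ 0 := fun h => hg u (Fin.ext h)
  rw [Fin.val_pred, Nat.sub_add_cancel (Nat.one_le_iff_ne_zero.2 hpos)]
  omega

end PathGraphHalf

theorem stmt2_general (s : ℕ → ℕ)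
    (h1 : s 0 = 1) (n : ℕ) (hn : 2 ≤ n) :
    SPackingChromatic (pathGraph n) s
      = SPackingChromatic (pathGraph (n / 2)) (fun i => s (i + 1) / 2) + 1 := by
  have : Nonempty (Fin n) := ⟨⟨0, by omega⟩⟩
  obtain ⟨k, hk⟩ := Nat.exists_eq_add_one.2 (sPackingChromatic_pos (G := pathGraph n) (s := s))
  obtain ⟨φ, hφ⟩ : ∃ φ : Fin n → Fin (k + 1), IsSPackingColoring (pathGraph n) s φ :=
    hk ▸ exists_isSPackingColoring_sPackingChromatic
  obtain ⟨ψ, hψ⟩ := exists_isSPackingColoring_half_of_pathGraph h1.ge hφ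
  obtain ⟨ψ₀, hψ₀⟩ := exists_isSPackingColoring_sPackingChromatic
    (G := pathGraph (n / 2)) (s := fun i => s (i + 1) / 2)
  obtain ⟨φ₀, hφ₀⟩ := exists_isSPackingColoring_pathGraph_of_half h1.le hψ₀
  have := hψ.sPackingChromatic_le
  have := hφ₀.sPackingChromatic_le
  omega

theorem stmt2 (s : ℕ → ℕ) (hmono : Monotone s) (hpos : ∀ i, 1 ≤ s i)
    (h1 : s 0 = 1) (n : ℕ) (hn : 2 ≤ n) :
    SPackingChromatic (pathGraph n) s
      = SPackingChromatic (pathGraph (n / 2)) (fun i => s (i + 1) / 2) + 1 :=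
  stmt2_general s h1 n hn
end

section
/- Let S=(1,s_2,s_3,...) be a packing sequence and define S' by s_i' = ⌊s_{i+1}/2⌋ for all i ≥ 1. Then for every integer n ≥ 3, χ_S(C_{2n}) ≤ χ_{S'}(C_n) + 1. -/
open SimpleGraph

lemma fin_sub_val {m : ℕ} (u v : Fin m) :
    (v - u).val = if u.val ≤ v.val then v.val - u.val else m - (u.val - v.val) := by
  rw [Fin.sub_def]
  have h1 := u.isLt; have h2 := v.isLt
  rcases le_or_gt u.val v.val with h | h
  · rw [if_pos h]
    show (m - u.val + v.val) % m = _
    have he : m - u.val + v.val = m + (v.val - u.val) := by omega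
    rw [he, Nat.add_mod_left, Nat.mod_eq_of_lt (by omega)]
  · rw [if_neg (by omega)]
    show (m - u.val + v.val) % m = _
    rw [Nat.mod_eq_of_lt (by omega)]
    omega

lemma walk_lb {m : ℕ} {u v : Fin m} (p : (cycleGraph m).Walk u v) :
    min (v - u).val (u - v).val ≤ p.length := by
  induction p with
  | nil => simp [fin_sub_val]
  | @cons a b c hab p ih =>
    rw [SimpleGraph.Walk.length_cons]
    rw [cycleGraph_adj'] at hab
    rw [fin_sub_val, fin_sub_val] at hab ih ⊢
    have h1 := a.isLt; have h2 := b.isLt; have h3 := c.isLt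
    split_ifs at hab ih ⊢ <;> omega

lemma edist_lb {m : ℕ} (u v : Fin m) :
    ((min (v - u).val (u - v).val : ℕ) : ℕ∞) ≤ (cycleGraph m).edist u v := by
  rw [SimpleGraph.edist_eq_sInf]
  apply le_sInf
  rintro x ⟨p, rfl⟩
  show _ ≤ ((p.length : ℕ) : ℕ∞)
  exact_mod_cast walk_lb p

lemma edist_ub {m : ℕ} (hm : 2 ≤ m) (u v : Fin m) :
    (cycleGraph m).edist u v ≤ ((v - u).val : ℕ∞) := by
  haveI : NeZero m := ⟨by omega⟩
  suffices key : ∀ (d : ℕ) (u v : Fin m), (v - u).val = d →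
      (cycleGraph m).edist u v ≤ (d : ℕ∞) from key _ u v rfl
  intro d
  induction d with
  | zero =>
    intro u v h
    rw [fin_sub_val] at h
    have h1 := u.isLt; have h2 := v.isLt
    split_ifs at h
    · have : v = u := Fin.val_injective (by omega)
      subst this; simp [edist_self]
    · omega
  | succ d ih =>
    intro u v h
    set w : Fin m := u + 1 with hw
    have hwv : w.val = (u.val + 1) % m := by
      rw [hw, Fin.add_def, Fin.val_one' m, Nat.mod_eq_of_lt (show 1 < m by omega)]
    have hadj : (cycleGraph m).Adj u w := by
      rw [cycleGraph_adj']
      right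
      rw [fin_sub_val, hwv]
      have h1 := u.isLt
      rcases Nat.lt_or_ge (u.val + 1) m with hc | hc
      · rw [Nat.mod_eq_of_lt hc]; simp
      · have : (u.val + 1) % m = 0 := by
          have : u.val + 1 = m := by omega
          rw [this, Nat.mod_self]
        rw [this]
        split_ifs <;> omega
    have hd : (v - w).val = d := by
      rw [fin_sub_val, hwv]
      rw [fin_sub_val] at h
      have h1 := u.isLt; have h2 := v.isLt
      rcases Nat.lt_or_ge (u.val + 1) m with hc | hc
      · rw [Nat.mod_eq_of_lt hc]
        split_ifs at h ⊢ <;> omega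
      · have hm0 : (u.val + 1) % m = 0 := by
          have : u.val + 1 = m := by omega
          rw [this, Nat.mod_self]
        rw [hm0]
        split_ifs at h ⊢ <;> omega
    have h1 : (cycleGraph m).edist u w ≤ (1 : ℕ∞) := by
      have := SimpleGraph.edist_le (SimpleGraph.Walk.cons hadj SimpleGraph.Walk.nil)
      simpa using this
    calc (cycleGraph m).edist u v ≤ _ + _ := SimpleGraph.edist_triangle (v := w)
      _ ≤ (1 : ℕ∞) + (d : ℕ∞) := add_le_add h1 (ih w v hd)
      _ = ((d + 1 : ℕ) : ℕ∞) := by push_cast; ring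

lemma edist_ub_min {m : ℕ} (hm : 2 ≤ m) (u v : Fin m) :
    (cycleGraph m).edist u v ≤ ((min (v - u).val (u - v).val : ℕ) : ℕ∞) := by
  rcases Nat.le_or_le (v - u).val (u - v).val with h | h
  · rw [Nat.min_eq_left h]; exact edist_ub hm u v
  · rw [Nat.min_eq_right h]
    rw [SimpleGraph.edist_comm]
    exact edist_ub hm v u

lemma even_case {n k : ℕ} (hn : 3 ≤ n) (s : ℕ → ℕ) (φ : Fin n → Fin k)
    (hφ : IsSPackingColoring (cycleGraph n) (fun i => s (i + 1) / 2) φ)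
    (u v : Fin (2 * n)) (huv : u ≠ v) (hu : u.val % 2 = 0) (hv : v.val % 2 = 0)
    (i j : Fin n) (hiu : i.val = u.val / 2) (hjv : j.val = v.val / 2)
    (heq : φ i = φ j) :
    ((s ((φ i).val + 1) : ℕ) : ℕ∞) < (cycleGraph (2 * n)).edist u v := by
  have hu2 := u.isLt; have hv2 := v.isLt
  have hvalne : u.val ≠ v.val := fun h => huv (Fin.val_injective h)
  have hij : i ≠ j := by
    intro h
    apply hvalne
    have := congrArg Fin.val h
    rw [hiu, hjv] at this
    omega
  have hcol := hφ i j hij heq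
  have hub := edist_ub_min (by omega) i j
  have hnat : s ((φ i : ℕ) + 1) / 2 < min (j - i).val (i - j).val :=
    Nat.cast_lt.mp (lt_of_lt_of_le hcol hub)
  have hd1 : (v - u).val = 2 * (j - i).val := by
    rw [fin_sub_val, fin_sub_val, hiu, hjv]
    split_ifs <;> omega
  have hd2 : (u - v).val = 2 * (i - j).val := by
    rw [fin_sub_val, fin_sub_val, hiu, hjv]
    split_ifs <;> omega
  have hlb := edist_lb u v
  rw [hd1, hd2] at hlb
  have hfin : s ((φ i : ℕ) + 1) < min (2 * (j - i).val) (2 * (i - j).val) := by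
    omega
  exact lt_of_lt_of_le (Nat.cast_lt.mpr hfin) hlb

theorem stmt5 (s : ℕ → ℕ) (hmono : Monotone s) (hpos : ∀ i, 1 ≤ s i)
    (h1 : s 0 = 1) (n : ℕ) (hn : 3 ≤ n) :
    SPackingChromatic (cycleGraph (2 * n)) s
      ≤ SPackingChromatic (cycleGraph n) (fun i => s (i + 1) / 2) + 1 := by
  set s' : ℕ → ℕ := fun i => s (i + 1) / 2 with hs'
  have hne : {k | ∃ φ : Fin n → Fin k, IsSPackingColoring (cycleGraph n) s' φ}.Nonempty :=
    ⟨n, fun v => v, fun u v huv heq => absurd heq huv⟩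
  have hmem := Nat.sInf_mem hne
  obtain ⟨φ, hφ⟩ := hmem
  rw [show SPackingChromatic (cycleGraph n) s' =
      sInf {k | ∃ φ : Fin n → Fin k, IsSPackingColoring (cycleGraph n) s' φ} from rfl]
  rw [show SPackingChromatic (cycleGraph (2 * n)) s =
      sInf {k | ∃ φ : Fin (2 * n) → Fin k, IsSPackingColoring (cycleGraph (2 * n)) s φ} from rfl]
  apply Nat.sInf_le
  refine ⟨fun v => if v.val % 2 = 1 then 0 else
      (φ ⟨v.val / 2, by have := v.isLt; omega⟩).succ, ?_⟩
  intro u v huv heq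
  beta_reduce at heq ⊢
  have hu2 := u.isLt; have hv2 := v.isLt
  have hvalne : u.val ≠ v.val := fun h => huv (Fin.val_injective h)
  by_cases hu : u.val % 2 = 1 <;> by_cases hv : v.val % 2 = 1
  · -- both odd : color 0
    rw [if_pos hu] at heq ⊢; rw [if_pos hv] at heq
    have hmin : 2 ≤ min (v - u).val (u - v).val := by
      rw [fin_sub_val, fin_sub_val]
      split_ifs <;> omega
    calc ((s ((0 : Fin _) : ℕ) : ℕ∞)) = (1 : ℕ∞) := by
            norm_num [Fin.val_zero, h1]
      _ < ((2 : ℕ) : ℕ∞) := by norm_num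
      _ ≤ ((min (v - u).val (u - v).val : ℕ) : ℕ∞) := by exact_mod_cast hmin
      _ ≤ (cycleGraph (2 * n)).edist u v := edist_lb u v
  · rw [if_pos hu, if_neg hv] at heq
    exact absurd heq.symm (Fin.succ_ne_zero _)
  · rw [if_neg hu, if_pos hv] at heq
    exact absurd heq (Fin.succ_ne_zero _)
  · -- both even
    rw [if_neg hu] at heq ⊢; rw [if_neg hv] at heq
    rw [Fin.val_succ]
    exact even_case hn s φ hφ u v huv (by omega) (by omega) _ _ rfl rfl
      (Fin.succ_inj.mp heq)
end

section
/- Let k ≥ 2 and let S=(s_1,s_2,...) be a packing sequence with 2^{i−1} ≤ s_i < 2^i for all i ≤ k−1 and s_k < 2^{k−1}. Then for every positive integer n, χ_S(P_n) = min{k, ⌊log_2 n⌋ + 1}. In particular χ_S(P_n) = k whenever n ≥ 2^{k−1}. -/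
open SimpleGraph

/-- Along any walk in the path graph, the endpoint values differ by at most the length. -/
lemma pathWalk_length_ge {n : ℕ} {u v : Fin n} (p : (pathGraph n).Walk u v) :
    ((u.val : ℤ) - v.val).natAbs ≤ p.length := by
  induction p with
  | nil => simp
  | cons h q ih =>
    rw [SimpleGraph.Walk.length_cons]
    rw [pathGraph_adj] at h
    omega

lemma le_edist_path {n : ℕ} (u v : Fin n) (huv : u.val ≤ v.val) :
    ((v.val - u.val : ℕ) : ℕ∞) ≤ (pathGraph n).edist u v := by
  rcases eq_or_ne ((pathGraph n).edist u v) ⊤ with h | h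
  · simp [h]
  · obtain ⟨p, hp⟩ := SimpleGraph.exists_walk_of_edist_ne_top h
    rw [← hp]
    have := pathWalk_length_ge p
    exact_mod_cast (by omega : v.val - u.val ≤ p.length)

lemma edist_path_le {n : ℕ} : ∀ (t : ℕ) (u v : Fin n), v.val = u.val + t →
    (pathGraph n).edist u v ≤ (t : ℕ∞) := by
  intro t
  induction t with
  | zero =>
    intro u v h
    have : u = v := Fin.ext (by omega)
    simp [this, SimpleGraph.edist_self]
  | succ t ih =>
    intro u v h
    have hw : u.val + t < n := by have := v.isLt; omega
    set w : Fin n := ⟨u.val + t, hw⟩ with hwdef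
    have hadj : (pathGraph n).Adj w v := by
      rw [pathGraph_adj]; left; simp [hwdef]; omega
    have h2 : (pathGraph n).edist w v ≤ 1 := by
      calc (pathGraph n).edist w v
          ≤ ((SimpleGraph.Walk.cons hadj SimpleGraph.Walk.nil).length : ℕ∞) :=
            SimpleGraph.edist_le _
        _ = 1 := by simp
    calc (pathGraph n).edist u v
        ≤ (pathGraph n).edist u w + (pathGraph n).edist w v := SimpleGraph.edist_triangle
      _ ≤ (t : ℕ∞) + 1 := add_le_add (ih u w rfl) h2
      _ = ((t + 1 : ℕ) : ℕ∞) := by push_cast; ring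

/-- Key combinatorial lemma: an interval admitting an S-packing coloring with `m`
colors, where `s j ≥ 2^j`, has fewer than `2^m` vertices. -/
lemma key_lemma (s : ℕ → ℕ) : ∀ (m a len : ℕ) (φ : ℕ → ℕ),
    (∀ j, j < m → 2 ^ j ≤ s j) →
    (∀ i, a ≤ i → i < a + len → φ i < m) →
    (∀ i j, a ≤ i → i < j → j < a + len → φ i = φ j → s (φ i) < j - i) →
    len < 2 ^ m := by
  intro m
  induction m with
  | zero =>
    intro a len φ _ hcol _
    by_contra h
    exact absurd (hcol a le_rfl (by omega)) (by omega)
  | succ m ih =>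
    intro a len φ hs hcol hval
    classical
    have huniq : ∀ i j, a ≤ i → i < j → j < a + len → φ i = m → φ j = m → False := by
      intro i j hai hij hj hfi hfj
      have hex : ∃ x, i < x ∧ x < a + len ∧ φ x = m := ⟨j, hij, hj, hfj⟩
      obtain ⟨hij0, hj0len, hfj0⟩ := Nat.find_spec hex
      set j0 := Nat.find hex with hj0def
      have hmin : ∀ x, x < j0 → ¬(i < x ∧ x < a + len ∧ φ x = m) := fun x hx => Nat.find_min hex hx
      have hsub : j0 - (i+1) < 2 ^ m := by
        apply ih (i+1) (j0 - (i+1)) φ (fun j hj => hs j (by omega))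
        · intro y hy1 hy2
          have hy3 : y < j0 := by omega
          have : φ y < m + 1 := hcol y (by omega) (by omega)
          have : φ y ≠ m := fun hc => hmin y hy3 ⟨by omega, by omega, hc⟩
          omega
        · intro x y hx hxy hy
          exact hval x y (by omega) hxy (by omega)
      have hsm : s m < j0 - i := by
        have := hval i j0 hai hij0 hj0len (by rw [hfi, hfj0])
        rwa [hfi] at this
      have := hs m (by omega)
      omega
    by_cases hex : ∃ p, a ≤ p ∧ p < a + len ∧ φ p = m
    · obtain ⟨p, hap, hplen, hfp⟩ := hex
      have hleft : p - a < 2 ^ m := by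
        apply ih a (p - a) φ (fun j hj => hs j (by omega))
        · intro y hy1 hy2
          have : φ y < m + 1 := hcol y hy1 (by omega)
          have : φ y ≠ m := fun hc => huniq y p hy1 (by omega) hplen hc hfp
          omega
        · intro x y hx hxy hy
          exact hval x y hx hxy (by omega)
      have hright : a + len - (p+1) < 2 ^ m := by
        apply ih (p+1) (a + len - (p+1)) φ (fun j hj => hs j (by omega))
        · intro y hy1 hy2
          have : φ y < m + 1 := hcol y (by omega) (by omega)
          have : φ y ≠ m := fun hc => huniq p y hap (by omega) (by omega) hfp hc
          omega
        · intro x y hx hxy hy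
          exact hval x y (by omega) hxy (by omega)
      have : (2:ℕ) ^ (m+1) = 2 * 2 ^ m := by ring
      omega
    · push_neg at hex
      have : len < 2 ^ m := by
        apply ih a len φ (fun j hj => hs j (by omega))
        · intro y hy1 hy2
          have h3 : φ y < m + 1 := hcol y hy1 hy2
          have h4 : φ y ≠ m := hex y hy1 hy2
          omega
        · exact hval
      have : (2:ℕ) ^ (m+1) = 2 * 2 ^ m := by ring
      omega

/-- Two numbers with the same 2-adic valuation `j` differ by a multiple of `2^(j+1)`. -/
lemma diff_dvd_of_val_eq (j x y : ℕ) (hx : 0 < x) (hxy : x < y)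
    (hjx : padicValNat 2 x = j) (hjy : padicValNat 2 y = j) :
    2 ^ (j+1) ∣ y - x := by
  have d1 : 2 ^ j ∣ x := hjx ▸ pow_padicValNat_dvd
  have d2 : 2 ^ j ∣ y := hjy ▸ pow_padicValNat_dvd
  have nd1 : ¬ 2 ^ (j+1) ∣ x := hjx ▸ pow_succ_padicValNat_not_dvd (by omega)
  have nd2 : ¬ 2 ^ (j+1) ∣ y := hjy ▸ pow_succ_padicValNat_not_dvd (by omega)
  obtain ⟨a, ha⟩ := d1
  obtain ⟨b, hb⟩ := d2
  have hoa : ¬ 2 ∣ a := by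
    rintro ⟨c, hc⟩
    exact nd1 ⟨c, by rw [ha, hc, pow_succ]; ring⟩
  have hob : ¬ 2 ∣ b := by
    rintro ⟨c, hc⟩
    exact nd2 ⟨c, by rw [hb, hc, pow_succ]; ring⟩
  have hab : a ≤ b := by
    by_contra hab
    have : y ≤ x := by rw [ha, hb]; exact Nat.mul_le_mul_left _ (by omega)
    omega
  obtain ⟨c, hc⟩ : 2 ∣ b - a := by omega
  refine ⟨c, ?_⟩
  have hbc : b = a + 2 * c := by omega
  rw [ha, hb, hbc, Nat.mul_add, Nat.add_sub_cancel_left, pow_succ]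
  ring



open SimpleGraph

theorem stmt7 (k : ℕ) (hk : 2 ≤ k) (s : ℕ → ℕ)
    (hmono : Monotone s) (hpos : ∀ i, 1 ≤ s i)
    (h1 : ∀ i, i + 1 ≤ k - 1 → 2 ^ i ≤ s i ∧ s i < 2 ^ (i + 1))
    (h2 : s (k - 1) < 2 ^ (k - 1)) (n : ℕ) (hn : 1 ≤ n) :
    SPackingChromatic (pathGraph n) s = min k (Nat.log 2 n + 1) := by
  classical
  set m := min k (Nat.log 2 n + 1) with hm
  have hm1 : 1 ≤ m := by omega
  have hmk : m ≤ k := by omega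
  set A := {k' | ∃ φ : Fin n → Fin k', IsSPackingColoring (pathGraph n) s φ} with hA
  -- Membership: there is a coloring with m colors
  have hmem : m ∈ A := by
    refine ⟨fun v => ⟨min (padicValNat 2 (v.val+1)) (m-1), by omega⟩, ?_⟩
    have hhelp : ∀ u v : Fin n, u.val < v.val →
        min (padicValNat 2 (u.val+1)) (m-1) = min (padicValNat 2 (v.val+1)) (m-1) →
        (s (min (padicValNat 2 (u.val+1)) (m-1)) : ℕ∞) < (pathGraph n).edist u v := by
      intro u v huv heq
      have key2 : s (min (padicValNat 2 (u.val+1)) (m-1)) < v.val - u.val := by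
        set j := min (padicValNat 2 (u.val+1)) (m-1) with hj
        by_cases hcase : j < m - 1
        · have hju : padicValNat 2 (u.val+1) = j := by omega
          have hjv : padicValNat 2 (v.val+1) = j := by omega
          have hdvd := diff_dvd_of_val_eq j (u.val+1) (v.val+1) (by omega) (by omega) hju hjv
          have hge : 2^(j+1) ≤ (v.val+1) - (u.val+1) := Nat.le_of_dvd (by omega) hdvd
          have hsj : s j < 2^(j+1) := (h1 j (by omega)).2
          omega
        · have hj' : j = m - 1 := by omega
          have hdu : 2^(m-1) ∣ u.val + 1 :=
            dvd_trans (pow_dvd_pow 2 (by omega : m-1 ≤ padicValNat 2 (u.val+1)))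
              pow_padicValNat_dvd
          have hdv : 2^(m-1) ∣ v.val + 1 :=
            dvd_trans (pow_dvd_pow 2 (by omega : m-1 ≤ padicValNat 2 (v.val+1)))
              pow_padicValNat_dvd
          by_cases hkm : m = k
          · have hdvd : 2^(m-1) ∣ (v.val+1) - (u.val+1) := Nat.dvd_sub hdv hdu
            have hge : 2^(m-1) ≤ (v.val+1) - (u.val+1) := Nat.le_of_dvd (by omega) hdvd
            have hs2 : s j < 2^(m-1) := by rw [hj', hkm]; exact h2
            omega
          · exfalso
            have h2u : 2^(m-1) ≤ u.val + 1 := Nat.le_of_dvd (by omega) hdu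
            obtain ⟨a, ha⟩ := hdu
            obtain ⟨b, hb⟩ := hdv
            have hab : a < b := by
              by_contra hba
              have : v.val + 1 ≤ u.val + 1 := by
                rw [ha, hb]; exact Nat.mul_le_mul_left _ (by omega)
              omega
            have ha1 : 1 ≤ a := by
              by_contra hc
              have : a = 0 := by omega
              rw [this, Nat.mul_zero] at ha
              omega
            have hvv : 2^(m-1) * 2 ≤ v.val + 1 := by
              calc 2^(m-1)*2 ≤ 2^(m-1)*b := Nat.mul_le_mul_left _ (by omega)
                _ = v.val+1 := hb.symm
            have hlt : v.val < n := v.isLt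
            have hlog : n < 2^(Nat.log 2 n + 1) := Nat.lt_pow_succ_log_self (by norm_num) n
            have hpow : 2^(m-1)*2 = 2^(Nat.log 2 n + 1) := by
              rw [← pow_succ]
              congr 1
              omega
            omega
      calc (s (min (padicValNat 2 (u.val+1)) (m-1)) : ℕ∞)
          < ((v.val - u.val : ℕ) : ℕ∞) := by exact_mod_cast key2
        _ ≤ (pathGraph n).edist u v := le_edist_path u v (by omega)
    intro u v huv heq
    have hval : u.val ≠ v.val := fun h => huv (Fin.ext h)
    have heq' : min (padicValNat 2 (u.val+1)) (m-1) = min (padicValNat 2 (v.val+1)) (m-1) := by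
      simpa using congrArg Fin.val heq
    rcases lt_or_gt_of_ne hval with h | h
    · exact hhelp u v h heq'
    · rw [SimpleGraph.edist_comm]
      have := hhelp v u h heq'.symm
      simp only [Fin.val_mk] at this ⊢
      rwa [heq'] 
  -- Lower bound: every coloring uses at least m colors
  have hlb : ∀ m' ∈ A, m ≤ m' := by
    rintro m' ⟨φ', hφ'⟩
    by_cases hkm' : k ≤ m'
    · omega
    · have hn2 : n < 2 ^ m' := by
        apply key_lemma s m' 0 n (fun i => if h : i < n then (φ' ⟨i, h⟩ : ℕ) else 0)
        · intro j hj
          exact (h1 j (by omega)).1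
        · intro i _ hi
          simp only [Nat.zero_add] at hi
          rw [dif_pos hi]
          exact (φ' ⟨i, hi⟩).isLt
        · intro i j _ hij hj hfij
          simp only [Nat.zero_add] at hj
          have hi : i < n := by omega
          rw [dif_pos hi, dif_pos hj] at hfij
          rw [dif_pos hi]
          have heq : φ' ⟨i, hi⟩ = φ' ⟨j, hj⟩ := Fin.ext hfij
          have hlt := hφ' ⟨i, hi⟩ ⟨j, hj⟩ (Fin.ne_of_val_ne (by omega : i ≠ j)) heq
          have hle := edist_path_le (j - i) ⟨i, hi⟩ ⟨j, hj⟩ (by simp; omega)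
          have : (s ((φ' ⟨i, hi⟩ : ℕ)) : ℕ∞) < ((j - i : ℕ) : ℕ∞) := lt_of_lt_of_le hlt hle
          exact_mod_cast this
      have := Nat.log_lt_of_lt_pow (by omega : n ≠ 0) hn2
      omega
  have hne : A.Nonempty := ⟨m, hmem⟩
  exact le_antisymm (Nat.sInf_le hmem) (hlb _ (Nat.sInf_mem hne))
end

section
/- Let S=(1,s_2,s_3,...) be a packing sequence and suppose there exists an index i with s_i < 2^{i−1}; let k = min{i : s_i < 2^{i−1}}. Then for every positive integer n, χ_S(P_n) ≥ min{k, ⌊log_2 n⌋ + 1}. -/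
open SimpleGraph

lemma path_edist_le' {n : ℕ} : ∀ (d : ℕ) (u v : Fin n), u.val + d = v.val →
    (pathGraph n).edist u v ≤ d := by
  intro d
  induction d with
  | zero =>
    intro u v h
    have : u = v := Fin.ext (by omega)
    subst this
    simp [edist_self]
  | succ d ih =>
    intro u v h
    have hw : u.val + 1 < n := by have := v.isLt; omega
    have hadj : (pathGraph n).Adj u ⟨u.val + 1, hw⟩ := pathGraph_adj.mpr (Or.inl rfl)
    have h1 : (pathGraph n).edist u ⟨u.val + 1, hw⟩ = 1 := edist_eq_one_iff_adj.mpr hadj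
    have h2 := ih ⟨u.val + 1, hw⟩ v (by simp; omega)
    calc (pathGraph n).edist u v
        ≤ (pathGraph n).edist u ⟨u.val + 1, hw⟩ + (pathGraph n).edist ⟨u.val + 1, hw⟩ v :=
          SimpleGraph.edist_triangle
      _ ≤ 1 + (d : ℕ∞) := add_le_add h1.le h2
      _ = ((d + 1 : ℕ) : ℕ∞) := by push_cast; ring

lemma key_lemma_s8 (s : ℕ → ℕ) (hs : ∀ i, 2 ^ i ≤ s i) {T : ℕ} (φ : ℕ → Fin T) :
    ∀ (t a : ℕ),
    (∀ x, a ≤ x → x < a + 2 ^ t → (φ x).val < t) →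
    (∀ u v, a ≤ u → v < a + 2 ^ t → u < v → φ u = φ v → s (φ u).val < v - u) →
    False := by
  intro t
  induction t with
  | zero =>
    intro a hcol _
    exact Nat.not_lt_zero _ (hcol a le_rfl (by omega))
  | succ t ih =>
    intro a hcol hdist
    have hpow : 2 ^ (t + 1) = 2 ^ t + 2 ^ t := by rw [pow_succ]; omega
    have h1t : 1 ≤ 2 ^ t := Nat.one_le_two_pow
    by_cases hp : ∃ p, a ≤ p ∧ p < a + 2 ^ t ∧ (φ p).val = t
    · obtain ⟨p, hp1, hp2, hp3⟩ := hp
      apply ih (p + 1)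
      · intro x hx1 hx2
        have hx3 : (φ x).val < t + 1 := hcol x (by omega) (by omega)
        rcases Nat.lt_succ_iff_lt_or_eq.mp hx3 with h | h
        · exact h
        · exfalso
          have heq : φ p = φ x := Fin.ext (by omega)
          have h5 := hdist p x hp1 (by omega) (by omega) heq
          rw [hp3] at h5
          have := hs t
          omega
      · intro u v hu hv huv heq
        exact hdist u v (by omega) (by omega) huv heq
    · apply ih a
      · intro x hx1 hx2
        have hx3 : (φ x).val < t + 1 := hcol x hx1 (by omega)
        have hx4 : (φ x).val ≠ t := fun h => hp ⟨x, hx1, hx2, h⟩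
        omega
      · intro u v hu hv huv heq
        exact hdist u v hu (by omega) huv heq

theorem stmt8 (s : ℕ → ℕ) (hmono : Monotone s) (hpos : ∀ i, 1 ≤ s i)
    (h1 : s 0 = 1) (hex : ∃ j, s j < 2 ^ j) (k : ℕ) (hk : k = Nat.find hex + 1)
    (n : ℕ) (hn : 1 ≤ n) :
    min k (Nat.log 2 n + 1) ≤ SPackingChromatic (pathGraph n) s := by
  have hne : {K | ∃ φ : Fin n → Fin K, IsSPackingColoring (pathGraph n) s φ}.Nonempty := by
    refine ⟨n, id, fun u v huv heq => absurd heq huv⟩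
  refine le_csInf hne fun K hK => ?_
  obtain ⟨φ, hφ⟩ := hK
  by_contra hcon
  push_neg at hcon
  rw [lt_min_iff] at hcon
  obtain ⟨hck, hcl⟩ := hcon
  have hKfind : K ≤ Nat.find hex := by omega
  have hKlog : K ≤ Nat.log 2 n := by omega
  have h2K : 2 ^ K ≤ n :=
    le_trans (Nat.pow_le_pow_right (by norm_num) hKlog) (Nat.pow_log_le_self 2 (by omega))
  set s' : ℕ → ℕ := fun i => if i < K then s i else 2 ^ i with hs'
  have hs'le : ∀ i, 2 ^ i ≤ s' i := by
    intro i
    by_cases h : i < K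
    · have hfind : ¬ s i < 2 ^ i := Nat.find_min hex (by omega)
      simp [hs', h]; omega
    · simp [hs', h]
  set φ' : ℕ → Fin K := fun x => φ ⟨x % n, Nat.mod_lt _ (by omega)⟩ with hφ'
  apply key_lemma_s8 s' hs'le φ' K 0
  · intro x _ _
    exact (φ' x).isLt
  · intro u v _ hv huv heq
    have hun : u < n := by omega
    have hvn : v < n := by omega
    have hu : (⟨u % n, Nat.mod_lt _ (by omega)⟩ : Fin n) = ⟨u, hun⟩ :=
      Fin.ext (Nat.mod_eq_of_lt hun)
    have hv' : (⟨v % n, Nat.mod_lt _ (by omega)⟩ : Fin n) = ⟨v, hvn⟩ :=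
      Fin.ext (Nat.mod_eq_of_lt hvn)
    have hφu : φ' u = φ ⟨u, hun⟩ := by rw [hφ']; exact congrArg φ hu
    have hφv : φ' v = φ ⟨v, hvn⟩ := by rw [hφ']; exact congrArg φ hv'
    rw [hφu, hφv] at heq
    have hne2 : (⟨u, hun⟩ : Fin n) ≠ ⟨v, hvn⟩ := by
      intro h
      have huv2 : u = v := congrArg Fin.val h
      omega
    have hd := hφ _ _ hne2 heq
    have hle := path_edist_le' (v - u) (⟨u, hun⟩ : Fin n) ⟨v, hvn⟩ (by show u + (v - u) = v; omega)
    have hlt : (s ((φ ⟨u, hun⟩ : Fin K) : ℕ) : ℕ∞) < ((v - u : ℕ) : ℕ∞) := lt_of_lt_of_le hd hle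
    have hnat : s ((φ ⟨u, hun⟩ : Fin K) : ℕ) < v - u := by exact_mod_cast hlt
    rw [hφu]
    have : s' ((φ ⟨u, hun⟩ : Fin K) : ℕ) = s ((φ ⟨u, hun⟩ : Fin K) : ℕ) := by
      simp [hs', (φ ⟨u, hun⟩).isLt]
    omega
end

section
/- Let S=(1,s_2,s_3,...) be a packing sequence with 2^{i−1} ≤ s_i < 2^i for every i ≥ 2. Then the path P_n is χ_S-critical if and only if n is a power of 2 (i.e., n = 2^j for some j ≥ 0). -/
open SimpleGraph

section Aux

variable {V : Type*} {G : SimpleGraph V}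

lemma aux_walk_dist (g : V → ℕ)
    (hg : ∀ u v : V, G.Adj u v → g u + 1 = g v ∨ g v + 1 = g u) :
    ∀ {u v : V} (p : G.Walk u v), Nat.dist (g u) (g v) ≤ p.length := by
  intro u v p
  induction p with
  | nil => simp [Nat.dist_self]
  | @cons a b c hadj q ih =>
    have h1 : Nat.dist (g a) (g b) ≤ 1 := by
      have := hg _ _ hadj
      have e : Nat.dist (g a) (g b) = (g a - g b) + (g b - g a) := rfl
      omega
    have h2 := Nat.dist.triangle_inequality (g a) (g b) (g c)
    have h3 : (SimpleGraph.Walk.cons hadj q).length = q.length + 1 :=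
      SimpleGraph.Walk.length_cons _ _
    omega

lemma aux_le_edist (g : V → ℕ)
    (hg : ∀ u v : V, G.Adj u v → g u + 1 = g v ∨ g v + 1 = g u) (u v : V) :
    (Nat.dist (g u) (g v) : ℕ∞) ≤ G.edist u v := by
  rw [edist_eq_sInf]
  refine le_sInf ?_
  rintro x ⟨p, rfl⟩
  show _ ≤ (p.length : ℕ∞)
  exact_mod_cast aux_walk_dist g hg p

lemma aux_crossing (g : V → ℕ)
    (hg : ∀ u v : V, G.Adj u v → g u + 1 = g v ∨ g v + 1 = g u) (m : ℕ) :
    ∀ {u v : V} (p : G.Walk u v), g u < m → m ≤ g v →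
      ∃ x y : V, G.Adj x y ∧ g x + 1 = m ∧ g y = m := by
  intro u v p
  induction p with
  | nil => intro h1 h2; omega
  | @cons a b c hadj q ih =>
    intro h1 h2
    rcases hg _ _ hadj with hab | hab
    · by_cases hm : g b = m
      · exact ⟨a, b, hadj, by omega, hm⟩
      · exact ih (by omega) h2
    · exact ih (by omega) h2

lemma aux_edist_chain (x : ℕ → V) (N : ℕ)
    (hadj : ∀ i, i + 1 < N → G.Adj (x i) (x (i + 1))) :
    ∀ (d a : ℕ), a + d < N → G.edist (x a) (x (a + d)) ≤ (d : ℕ∞) := by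
  intro d
  induction d with
  | zero => intro a _; simp
  | succ d ih =>
    intro a ha
    have h1 := ih a (by omega)
    have h2 : G.edist (x (a + d)) (x (a + d + 1)) ≤ 1 :=
      le_of_eq (edist_eq_one_iff_adj.mpr (hadj (a + d) (by omega)))
    calc G.edist (x a) (x (a + (d + 1)))
        ≤ G.edist (x a) (x (a + d)) + G.edist (x (a + d)) (x (a + d + 1)) :=
          SimpleGraph.edist_triangle
      _ ≤ (d : ℕ∞) + 1 := add_le_add h1 h2
      _ = ((d + 1 : ℕ) : ℕ∞) := by push_cast; ring

lemma aux_nu_lt {m t : ℕ} (hm : m ≠ 0) (hmt : m < 2 ^ t) : padicValNat 2 m < t := by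
  have h1 : 2 ^ padicValNat 2 m ≤ m :=
    Nat.le_of_dvd (Nat.pos_of_ne_zero hm) pow_padicValNat_dvd
  have h2 : (2 : ℕ) ^ padicValNat 2 m < 2 ^ t := lt_of_le_of_lt h1 hmt
  exact (Nat.pow_lt_pow_iff_right (by norm_num)).mp h2

lemma aux_nu_diff {a b : ℕ} (ha : a ≠ 0) (hab : a < b)
    (hnu : padicValNat 2 a = padicValNat 2 b) :
    2 ^ (padicValNat 2 a + 1) ≤ b - a := by
  haveI : Fact (Nat.Prime 2) := ⟨Nat.prime_two⟩
  have hb : b ≠ 0 := by omega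
  have hna : ¬ 2 ^ (padicValNat 2 a + 1) ∣ a := pow_succ_padicValNat_not_dvd ha
  have hnb : ¬ 2 ^ (padicValNat 2 a + 1) ∣ b := by
    rw [hnu]; exact pow_succ_padicValNat_not_dvd hb
  obtain ⟨a', ha'⟩ : 2 ^ padicValNat 2 a ∣ a := pow_padicValNat_dvd
  obtain ⟨b', hb'⟩ : 2 ^ padicValNat 2 a ∣ b := by rw [hnu]; exact pow_padicValNat_dvd
  set c := padicValNat 2 a with hc
  have hoa : ¬ 2 ∣ a' := fun ⟨t, ht⟩ => hna ⟨t, by rw [ha', ht, pow_succ]; ring⟩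
  have hob : ¬ 2 ∣ b' := fun ⟨t, ht⟩ => hnb ⟨t, by rw [hb', ht, pow_succ]; ring⟩
  have hab' : a' < b' := by
    by_contra hcon
    push_neg at hcon
    have : b ≤ a := by rw [ha', hb']; exact Nat.mul_le_mul_left _ hcon
    omega
  obtain ⟨t, ht⟩ : 2 ∣ b' - a' := by omega
  have hbt : b' = a' + 2 * t := by omega
  have hb2 : b = a + 2 ^ (c + 1) * t := by
    rw [ha', hb', hbt, pow_succ]; ring
  have htpos : 1 ≤ t := by
    rcases Nat.eq_zero_or_pos t with rfl | h'
    · simp at hb2; omega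
    · exact h'
  have : 2 ^ (c + 1) ≤ 2 ^ (c + 1) * t := Nat.le_mul_of_pos_right _ (by omega)
  omega

lemma aux_window (s : ℕ → ℕ) (h1 : s 0 = 1) (hsge : ∀ i, 1 ≤ i → 2 ^ i ≤ s i)
    {k : ℕ} (φ : V → Fin k) (hφ : IsSPackingColoring G s φ) (x : ℕ → V) (N : ℕ)
    (hinj : ∀ a b, a < N → b < N → a ≠ b → x a ≠ x b)
    (hd : ∀ a b, a ≤ b → b < N → G.edist (x a) (x b) ≤ ((b - a : ℕ) : ℕ∞))
    (hN : 2 ^ k ≤ N) : False := by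
  have claim : ∀ m, m ≤ k → ∀ a, a + 2 ^ m ≤ N →
      ∃ i, a ≤ i ∧ i < a + 2 ^ m ∧ m ≤ (φ (x i)).val := by
    intro m
    induction m with
    | zero => intro _ a ha; exact ⟨a, le_refl a, by simpa using Nat.lt_succ_self a, Nat.zero_le _⟩
    | succ m ih =>
      intro hmk a ha
      by_contra hcon
      push_neg at hcon
      have hpow : (2:ℕ) ^ (m + 1) = 2 ^ m + 2 ^ m := by rw [pow_succ]; ring
      have hp0 : 0 < 2 ^ m := pow_pos (by norm_num) m
      rw [hpow] at ha
      have hstrong : ∀ i, a ≤ i → i < a + (2 ^ m + 2 ^ m) → (φ (x i)).val < m + 1 := by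
        intro i h1' h2'
        have := hcon i h1' (by omega)
        omega
      clear hcon
      have h2m : a + 2 ^ m ≤ N := by omega
      obtain ⟨i1, hi1a, hi1b, hi1c⟩ := ih (by omega) a h2m
      have hc1 : (φ (x i1)).val = m := by
        have := hstrong i1 hi1a (by omega)
        omega
      obtain ⟨i2, hi2a, hi2b, hi2c⟩ := ih (by omega) (i1 + 1) (by omega)
      have hc2 : (φ (x i2)).val = m := by
        have := hstrong i2 (by omega) (by omega)
        omega
      have hne : x i1 ≠ x i2 := hinj i1 i2 (by omega) (by omega) (by omega)
      have heq : φ (x i1) = φ (x i2) := Fin.ext (by omega)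
      have hlt := hφ (x i1) (x i2) hne heq
      have hle : G.edist (x i1) (x i2) ≤ ((i2 - i1 : ℕ) : ℕ∞) := hd i1 i2 (by omega) (by omega)
      have hlt2 : ((s m : ℕ) : ℕ∞) < ((i2 - i1 : ℕ) : ℕ∞) := by
        have hcast : ((φ (x i1)) : ℕ) = m := hc1
        rw [hcast] at hlt
        exact lt_of_lt_of_le hlt hle
      have hlt3 : s m < i2 - i1 := by exact_mod_cast hlt2
      have hsm : i2 - i1 ≤ s m := by
        rcases Nat.eq_zero_or_pos m with rfl | hm
        · simp only [h1]; omega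
        · have := hsge m hm; omega
      omega
  obtain ⟨i, _, _, hi⟩ := claim k le_rfl 0 (by omega)
  exact absurd hi (by have := (φ (x i)).isLt; omega)

lemma aux_ruler (s : ℕ → ℕ) (hslt : ∀ c, s c < 2 ^ (c + 1)) (n J : ℕ) (hnJ : n < 2 ^ J) :
    ∃ φ : Fin n → Fin J, IsSPackingColoring (pathGraph n) s φ := by
  have hbound : ∀ v : Fin n, padicValNat 2 (v.val + 1) < J :=
    fun v => aux_nu_lt (by omega) (by have := v.isLt; omega)
  refine ⟨fun v => ⟨padicValNat 2 (v.val + 1), hbound v⟩, ?_⟩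
  have hgadj : ∀ u v : Fin n, (pathGraph n).Adj u v →
      (fun z : Fin n => z.val) u + 1 = (fun z : Fin n => z.val) v ∨
      (fun z : Fin n => z.val) v + 1 = (fun z : Fin n => z.val) u := by
    intro u v huv
    simpa using (pathGraph_adj.mp huv)
  have key : ∀ u v : Fin n, u.val < v.val →
      padicValNat 2 (u.val + 1) = padicValNat 2 (v.val + 1) →
      (s (padicValNat 2 (u.val + 1)) : ℕ∞) < (pathGraph n).edist u v := by
    intro u v huv hnu
    have hdiff : 2 ^ (padicValNat 2 (u.val + 1) + 1) ≤ (v.val + 1) - (u.val + 1) :=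
      aux_nu_diff (by omega) (by omega) hnu
    have hlow := aux_le_edist (fun z : Fin n => z.val) hgadj u v
    have hdist : Nat.dist u.val v.val = v.val - u.val := Nat.dist_eq_sub_of_le (le_of_lt huv)
    have hsl : s (padicValNat 2 (u.val + 1)) < v.val - u.val := by
      have := hslt (padicValNat 2 (u.val + 1)); omega
    calc ((s (padicValNat 2 (u.val + 1)) : ℕ) : ℕ∞)
        < ((v.val - u.val : ℕ) : ℕ∞) := by exact_mod_cast hsl
      _ = (Nat.dist u.val v.val : ℕ∞) := by rw [hdist]
      _ ≤ _ := hlow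
  intro u v hne heq
  have heq' : padicValNat 2 (u.val + 1) = padicValNat 2 (v.val + 1) := congrArg Fin.val heq
  have hvne : u.val ≠ v.val := fun e => hne (Fin.ext e)
  show (s (padicValNat 2 (u.val + 1)) : ℕ∞) < (pathGraph n).edist u v
  rcases Nat.lt_or_ge u.val v.val with hlt | hge
  · exact key u v hlt heq'
  · have hlt : v.val < u.val := by omega
    rw [heq', edist_comm]
    exact key v u hlt heq'.symm

lemma aux_path_lt (s : ℕ → ℕ) (h1 : s 0 = 1) (hsge : ∀ i, 1 ≤ i → 2 ^ i ≤ s i)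
    {n k : ℕ} (φ : Fin n → Fin k) (hφ : IsSPackingColoring (pathGraph n) s φ) :
    n < 2 ^ k := by
  by_contra hcon
  push_neg at hcon
  have hn1 : 1 ≤ n := le_trans (Nat.one_le_two_pow) hcon
  set x : ℕ → Fin n := fun i => ⟨min i (n - 1), by omega⟩ with hx
  have hadj : ∀ i, i + 1 < n → (pathGraph n).Adj (x i) (x (i + 1)) := by
    intro i hi
    rw [pathGraph_adj]
    simp only [hx]
    omega
  apply aux_window s h1 hsge φ hφ x n ?_ ?_ hcon
  · intro a b ha hb hab e
    have := congrArg Fin.val e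
    simp only [hx] at this
    omega
  · intro a b hab hb
    have := aux_edist_chain x n hadj (b - a) a (by omega)
    rwa [Nat.add_sub_cancel' hab] at this

end Aux

lemma aux_subgraph_col (s : ℕ → ℕ) (hslt : ∀ c, s c < 2 ^ (c + 1)) {n : ℕ}
    (H : (pathGraph n).Subgraph) (hH : H ≠ ⊤) {j : ℕ} (hnj : n = 2 ^ j) :
    ∃ φ : ↥H.verts → Fin j, IsSPackingColoring H.coe s φ := by
  classical
  set edgeP : ℕ → Prop :=
    fun i => ∃ hi : i + 1 < n, H.Adj ⟨i, Nat.lt_of_succ_lt hi⟩ ⟨i + 1, hi⟩ with hedgeP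
  set Sr : ℕ → Set ℕ := fun m => {t | ∀ i, t ≤ i → i < m → edgeP i} with hSr
  set r : ℕ → ℕ := fun m => sInf (Sr m) with hr
  have hmemS : ∀ m, m ∈ Sr m := by
    intro m i hi hi'
    exact absurd (lt_of_le_of_lt hi hi') (lt_irrefl m)
  have hrS : ∀ m, r m ∈ Sr m := fun m => Nat.sInf_mem ⟨m, hmemS m⟩
  have hrle : ∀ m, r m ≤ m := fun m => Nat.sInf_le (hmemS m)
  have hrmax : ∀ m, 0 < r m → ¬ edgeP (r m - 1) := by
    intro m hm he
    have hmem : r m - 1 ∈ Sr m := by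
      intro i hi hi'
      rcases eq_or_lt_of_le hi with he2 | hlt2
      · exact he2 ▸ he
      · exact hrS m i (by omega) hi'
    have h2 : r m ≤ r m - 1 := Nat.sInf_le hmem
    omega
  have hmiss : (∃ w : Fin n, w ∉ H.verts) ∨ (∃ i, i + 1 < n ∧ ¬ edgeP i) := by
    by_contra hc
    push_neg at hc
    obtain ⟨hv, he⟩ := hc
    apply hH
    have hadj : ∀ u v : Fin n, (pathGraph n).Adj u v → H.Adj u v := by
      intro u v huv
      rcases u with ⟨uv, hu⟩
      rcases v with ⟨vv, hvv⟩
      rw [pathGraph_adj] at huv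
      simp only at huv
      rcases huv with h' | h'
      · obtain ⟨hi, ha⟩ : edgeP uv := he uv (by omega)
        have : vv = uv + 1 := by omega
        subst this
        exact ha
      · obtain ⟨hi, ha⟩ : edgeP vv := he vv (by omega)
        have : uv = vv + 1 := by omega
        subst this
        exact ha.symm
    refine SimpleGraph.Subgraph.ext ?_ ?_
    · rw [Subgraph.verts_top]
      exact Set.eq_univ_of_forall hv
    · funext u v
      rw [Subgraph.top_adj]
      exact propext ⟨fun h' => H.adj_sub h', fun h' => hadj u v h'⟩
  have hrun : ∀ v : Fin n, v ∈ H.verts → v.val - r v.val + 1 ≤ n - 1 := by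
    intro v hv
    by_contra hcon
    push_neg at hcon
    have hvn := v.isLt
    have hr0 : r v.val = 0 := by have := hrle v.val; omega
    have hv1 : v.val = n - 1 := by have := hrle v.val; have := v.isLt; omega
    rcases hmiss with ⟨w, hw⟩ | ⟨i, hin, hie⟩
    · rcases w with ⟨wv, hwlt⟩
      rcases eq_or_lt_of_le (show wv ≤ v.val by omega) with hwv | hwv
      · refine hw ?_
        have hwv' : (⟨wv, hwlt⟩ : Fin n) = v := Fin.ext hwv
        rw [hwv']
        exact hv
      · obtain ⟨hiw, ha⟩ := hrS v.val wv (by omega) (by omega)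
        exact hw (H.edge_vert ha)
    · obtain ⟨hi', ha⟩ := hrS v.val i (by omega) (by omega)
      exact hie ⟨hi', ha⟩
  have h2jpos : 0 < 2 ^ j := pow_pos (by norm_num) j
  have hb : ∀ v : ↥H.verts, padicValNat 2 (v.1.val - r v.1.val + 1) < j := by
    intro v
    have hb1 := hrun v.1 v.2
    refine aux_nu_lt (by omega) (by omega)
  refine ⟨fun v => ⟨padicValNat 2 (v.1.val - r v.1.val + 1), hb v⟩, ?_⟩
  have hgadj : ∀ u v : ↥H.verts, H.coe.Adj u v →
      (fun z : ↥H.verts => z.1.val) u + 1 = (fun z : ↥H.verts => z.1.val) v ∨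
      (fun z : ↥H.verts => z.1.val) v + 1 = (fun z : ↥H.verts => z.1.val) u := by
    intro u v huv
    have h' : (pathGraph n).Adj u.1 v.1 := H.adj_sub huv
    rw [pathGraph_adj] at h'
    simpa using h'
  have key : ∀ u v : ↥H.verts,
      padicValNat 2 (u.1.val - r u.1.val + 1) = padicValNat 2 (v.1.val - r v.1.val + 1) →
      (r u.1.val < r v.1.val ∨ (r u.1.val = r v.1.val ∧ u.1.val < v.1.val)) →
      (s (padicValNat 2 (u.1.val - r u.1.val + 1)) : ℕ∞) < H.coe.edist u v := by
    intro u v hnu hcase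
    rcases hcase with hlt | ⟨hreq, hlt⟩
    · have h0 : 0 < r v.1.val := by omega
      have hnbe := hrmax v.1.val h0
      have hrlev := hrle v.1.val
      have huval : u.1.val < r v.1.val := by
        by_contra hge
        push_neg at hge
        exact hnbe (hrS u.1.val (r v.1.val - 1) (by omega) (by omega))
      have hnr : ¬ H.coe.Reachable u v := by
        intro hr'
        obtain ⟨p⟩ := hr'
        obtain ⟨x, y, hxy, hx1, hy1⟩ :=
          aux_crossing (fun z : ↥H.verts => z.1.val) hgadj (r v.1.val) p huval hrlev
        apply hnbe
        have hyn : r v.1.val < n := lt_of_le_of_lt hrlev v.1.isLt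
        refine ⟨by omega, ?_⟩
        have hadj2 : H.Adj x.1 y.1 := hxy
        rcases x with ⟨⟨xv, hxv⟩, hxm⟩
        rcases y with ⟨⟨yv, hyv⟩, hym⟩
        simp only at hx1 hy1 hadj2
        have ex : xv = r v.1.val - 1 := by omega
        have ey : yv = r v.1.val - 1 + 1 := by omega
        subst ex
        subst ey
        exact hadj2
      rw [edist_eq_top_of_not_reachable hnr]
      exact ENat.coe_lt_top _
    · have hru : r u.1.val ≤ u.1.val := hrle _
      have hdiff := aux_nu_diff (a := u.1.val - r u.1.val + 1) (b := v.1.val - r v.1.val + 1)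
        (by omega) (by omega) hnu
      have hd2 : 2 ^ (padicValNat 2 (u.1.val - r u.1.val + 1) + 1) ≤ v.1.val - u.1.val := by
        omega
      have hlow := aux_le_edist (fun z : ↥H.verts => z.1.val) hgadj u v
      have hdist : Nat.dist u.1.val v.1.val = v.1.val - u.1.val :=
        Nat.dist_eq_sub_of_le (by omega)
      have hsl : s (padicValNat 2 (u.1.val - r u.1.val + 1)) < v.1.val - u.1.val := by
        have := hslt (padicValNat 2 (u.1.val - r u.1.val + 1)); omega
      calc ((s (padicValNat 2 (u.1.val - r u.1.val + 1)) : ℕ) : ℕ∞)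
          < ((v.1.val - u.1.val : ℕ) : ℕ∞) := by exact_mod_cast hsl
        _ = (Nat.dist u.1.val v.1.val : ℕ∞) := by rw [hdist]
        _ ≤ _ := hlow
  intro u v hne heq
  have hval : padicValNat 2 (u.1.val - r u.1.val + 1) = padicValNat 2 (v.1.val - r v.1.val + 1) :=
    congrArg Fin.val heq
  have hvne : u.1.val ≠ v.1.val := fun e => hne (Subtype.ext (Fin.ext e))
  show (s (padicValNat 2 (u.1.val - r u.1.val + 1)) : ℕ∞) < H.coe.edist u v
  rcases lt_trichotomy (r u.1.val) (r v.1.val) with hrc | hrc | hrc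
  · exact key u v hval (Or.inl hrc)
  · rcases Nat.lt_or_ge u.1.val v.1.val with hlt | hge
    · exact key u v hval (Or.inr ⟨hrc, hlt⟩)
    · rw [hval, SimpleGraph.edist_comm]
      exact key v u hval.symm (Or.inr ⟨hrc.symm, by omega⟩)
  · rw [hval, SimpleGraph.edist_comm]
    exact key v u hval.symm (Or.inl hrc)

theorem stmt12 (s : ℕ → ℕ) (hmono : Monotone s) (hpos : ∀ i, 1 ≤ s i)
    (h1 : s 0 = 1) (h : ∀ i, 1 ≤ i → 2 ^ i ≤ s i ∧ s i < 2 ^ (i + 1))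
    (n : ℕ) (hn : 1 ≤ n) :
    SCritical (pathGraph n) s ↔ ∃ j, n = 2 ^ j := by
  have hslt : ∀ c, s c < 2 ^ (c + 1) := by
    intro c
    rcases Nat.eq_zero_or_pos c with rfl | hc
    · simp [h1]
    · exact (h c hc).2
  have hsge' : ∀ i, 1 ≤ i → 2 ^ i ≤ s i := fun i hi => (h i hi).1
  constructor
  · -- SCritical → power of two
    intro hcrit
    by_contra hnp
    push_neg at hnp
    set j := Nat.log 2 n with hj
    have hlow : 2 ^ j ≤ n := Nat.pow_log_le_self 2 (by omega)
    have hup : n < 2 ^ (j + 1) := Nat.lt_pow_succ_log_self (by norm_num) n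
    have hlow' : 2 ^ j ≤ n - 1 := by
      have := hnp j
      omega
    have h2jpos : 0 < 2 ^ j := pow_pos (by norm_num) j
    have hn2 : 2 ≤ n := by omega
    set H : (pathGraph n).Subgraph :=
      (⊤ : (pathGraph n).Subgraph).deleteVerts {v | v.val = n - 1} with hHdef
    have hHverts : ∀ v : Fin n, v ∈ H.verts ↔ v.val ≠ n - 1 := by
      intro v
      rw [hHdef]
      simp [Subgraph.deleteVerts_verts]
    have hHne : H ≠ ⊤ := by
      intro e
      have hmem : (⟨n - 1, by omega⟩ : Fin n) ∈ H.verts := by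
        rw [e, Subgraph.verts_top]
        exact Set.mem_univ _
      rw [hHverts] at hmem
      exact hmem rfl
    obtain ⟨φP, hφP⟩ := aux_ruler s hslt n (j + 1) hup
    have hchromP : SPackingChromatic (pathGraph n) s ≤ j + 1 := Nat.sInf_le ⟨φP, hφP⟩
    set SH := {k | ∃ φ : ↥H.verts → Fin k, IsSPackingColoring H.coe s φ} with hSH
    have hchromH : SPackingChromatic H.coe s = sInf SH := rfl
    have hHnonempty : SH.Nonempty := by
      rw [hSH]
      refine ⟨n, fun v => ⟨v.1.val, v.1.isLt⟩, ?_⟩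
      intro u v hne heq
      exact absurd (Subtype.ext (Fin.ext (by
        simpa using congrArg Fin.val heq))) hne
    obtain ⟨φH, hφH⟩ := Nat.sInf_mem hHnonempty
    have hk0ge : j + 1 ≤ sInf SH := by
      by_contra hcon
      push_neg at hcon
      have hxmem : ∀ i : ℕ, (⟨min i (n - 2), by omega⟩ : Fin n) ∈ H.verts := by
        intro i
        rw [hHverts]
        simp only
        omega
      set x : ℕ → ↥H.verts := fun i => ⟨⟨min i (n - 2), by omega⟩, hxmem i⟩ with hxdef
      have hadjx : ∀ i, i + 1 < n - 1 → H.coe.Adj (x i) (x (i + 1)) := by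
        intro i hi
        have h' : ((⊤ : (pathGraph n).Subgraph).deleteVerts {v | v.val = n - 1}).Adj
            ⟨min i (n - 2), by omega⟩ ⟨min (i + 1) (n - 2), by omega⟩ := by
          rw [Subgraph.deleteVerts_adj]
          refine ⟨Set.mem_univ _, ?_, Set.mem_univ _, ?_, ?_⟩
          · simp only [Set.mem_setOf_eq]; omega
          · simp only [Set.mem_setOf_eq]; omega
          · rw [Subgraph.top_adj, pathGraph_adj]
            simp only
            omega
        exact h'
      have hpow : 2 ^ sInf SH ≤ 2 ^ j :=
        Nat.pow_le_pow_right (by norm_num) (by omega)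
      refine aux_window s h1 hsge' φH hφH x (n - 1) ?_ ?_ (by omega)
      · intro a b ha hb hab e
        have := congrArg (fun z : ↥H.verts => z.1.val) e
        simp only [hxdef] at this
        omega
      · intro a b hab hb
        have := aux_edist_chain x (n - 1) hadjx (b - a) a (by omega)
        rwa [Nat.add_sub_cancel' hab] at this
    have := hcrit H hHne
    omega
  · rintro ⟨j, rfl⟩
    intro H hH
    have hup : (2 : ℕ) ^ j < 2 ^ (j + 1) := Nat.pow_lt_pow_succ (by norm_num)
    set SP := {k | ∃ φ : Fin (2 ^ j) → Fin k,
        IsSPackingColoring (pathGraph (2 ^ j)) s φ} with hSP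
    have hchromP2 : SPackingChromatic (pathGraph (2 ^ j)) s = sInf SP := rfl
    have hPne : SP.Nonempty := by
      rw [hSP]
      obtain ⟨φ, hφ⟩ := aux_ruler s hslt (2 ^ j) (j + 1) hup
      exact ⟨j + 1, φ, hφ⟩
    obtain ⟨φP, hφP⟩ := Nat.sInf_mem hPne
    have hPge : j + 1 ≤ SPackingChromatic (pathGraph (2 ^ j)) s := by
      have hlt := aux_path_lt s h1 hsge' φP hφP
      have := (Nat.pow_lt_pow_iff_right (by norm_num : 1 < 2)).mp hlt
      omega
    obtain ⟨φH, hφH⟩ := aux_subgraph_col s hslt H hH rfl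
    have hHle : SPackingChromatic H.coe s ≤ j := Nat.sInf_le ⟨φH, hφH⟩
    omega
end

section
/- Define the coloring φ of the path P_n with vertices v_1,...,v_n by: φ(v_i) = j if i ≡ 2^{j−1} (mod 2^j) for some 1 ≤ j ≤ k−1, and φ(v_i) = k if i ≡ 0 (mod 2^{k−1}). Then for any packing sequence S with 2^{i−1} ≤ s_i < 2^i for i ≤ k−1 and s_k < 2^{k−1}, φ is an S-packing coloring of P_n using min{k, ⌊log_2 n⌋ + 1} colors. -/
open SimpleGraph

lemma aux_walk_length_ge {n : ℕ} {u v : Fin n} (p : (pathGraph n).Walk u v) :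
    Nat.dist u.val v.val ≤ p.length := by
  induction p with
  | nil => simp [Nat.dist_self]
  | @cons x y z h q ih =>
    have hxy : Nat.dist x.val y.val = 1 := by
      rw [pathGraph_adj] at h
      rcases h with h | h <;> simp [Nat.dist] <;> omega
    calc Nat.dist x.val z.val ≤ Nat.dist x.val y.val + Nat.dist y.val z.val :=
          Nat.dist.triangle_inequality _ _ _
      _ ≤ 1 + q.length := by rw [hxy]; omega
      _ = (SimpleGraph.Walk.cons h q).length := by simp [SimpleGraph.Walk.length_cons]; omega

lemma aux_dist_le_edist {n : ℕ} (u v : Fin n) :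
    (Nat.dist u.val v.val : ℕ∞) ≤ (pathGraph n).edist u v := by
  rcases eq_or_ne ((pathGraph n).edist u v) ⊤ with h | h
  · simp [h]
  · obtain ⟨p, hp⟩ := SimpleGraph.exists_walk_of_edist_ne_top h
    rw [← hp]
    exact_mod_cast aux_walk_length_ge p

lemma aux_modeq_le_dist {m a b : ℕ} (h : a ≡ b [MOD m]) (hne : a ≠ b) :
    m ≤ Nat.dist a b := by
  rcases Nat.lt_or_ge a b with hlt | hge
  · have hd := (Nat.modEq_iff_dvd' hlt.le).mp h
    rw [Nat.dist_eq_sub_of_le hlt.le]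
    exact Nat.le_of_dvd (by omega) hd
  · have hlt : b < a := by omega
    have hd := (Nat.modEq_iff_dvd' hlt.le).mp h.symm
    rw [Nat.dist_eq_sub_of_le_right hlt.le]
    exact Nat.le_of_dvd (by omega) hd

lemma aux_mod_eq {c a : ℕ} (h1 : 2 ^ c ∣ a) (h2 : ¬ 2 ^ (c + 1) ∣ a) :
    a % 2 ^ (c + 1) = 2 ^ c := by
  have hr : 2 ^ c ∣ a % 2 ^ (c + 1) :=
    (Nat.dvd_mod_iff (pow_dvd_pow 2 (Nat.le_succ c))).mpr h1
  have hlt : a % 2 ^ (c + 1) < 2 ^ (c + 1) := Nat.mod_lt _ (by positivity)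
  have hne : a % 2 ^ (c + 1) ≠ 0 := by
    intro h0
    exact h2 (Nat.dvd_of_mod_eq_zero h0)
  obtain ⟨t, ht⟩ := hr
  rw [ht] at hlt hne ⊢
  rw [pow_succ] at hlt
  have hpos : 0 < 2 ^ c := by positivity
  have ht2 : t < 2 := lt_of_mul_lt_mul_left hlt hpos.le
  have ht1 : t ≠ 0 := by rintro rfl; simp at hne
  have : t = 1 := by omega
  simp [this]

theorem stmt14 (k : ℕ) (hk : 2 ≤ k) (s : ℕ → ℕ)
    (hmono : Monotone s) (hpos : ∀ i, 1 ≤ s i)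
    (h1 : ∀ i, i + 1 ≤ k - 1 → 2 ^ i ≤ s i ∧ s i < 2 ^ (i + 1))
    (h2 : s (k - 1) < 2 ^ (k - 1)) (n : ℕ) (hn : 1 ≤ n) :
    (∀ u v : Fin n, u ≠ v →
        min (padicValNat 2 ((u : ℕ) + 1)) (k - 1)
          = min (padicValNat 2 ((v : ℕ) + 1)) (k - 1) →
        (s (min (padicValNat 2 ((u : ℕ) + 1)) (k - 1)) : ℕ∞)
          < (pathGraph n).edist u v) ∧
    Set.range (fun i : Fin n => min (padicValNat 2 ((i : ℕ) + 1)) (k - 1))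
      = Set.Iio (min k (Nat.log 2 n + 1)) := by
  have hfact : Fact (Nat.Prime 2) := ⟨Nat.prime_two⟩
  constructor
  · intro u v huv hcol
    set a : ℕ := (u : ℕ) + 1 with ha
    set b : ℕ := (v : ℕ) + 1 with hb
    have hane : a ≠ 0 := by omega
    have hbne : b ≠ 0 := by omega
    have hab : a ≠ b := by
      have : (u : ℕ) ≠ (v : ℕ) := fun h => huv (Fin.val_injective h)
      omega
    set c : ℕ := min (padicValNat 2 a) (k - 1) with hc
    have key : ∃ m : ℕ, s c < m ∧ a ≡ b [MOD m] := by
      rcases Nat.lt_or_ge (padicValNat 2 a) (k - 1) with hlt | hge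
      · -- c = padicValNat 2 a < k - 1, and padicValNat 2 b = c
        have hca : c = padicValNat 2 a := by omega
        have hcb : padicValNat 2 b = c := by
          rcases Nat.lt_or_ge (padicValNat 2 b) (k - 1) with h' | h' <;> omega
        refine ⟨2 ^ (c + 1), (h1 c (by omega)).2, ?_⟩
        have hma : a % 2 ^ (c + 1) = 2 ^ c := by
          apply aux_mod_eq
          · rw [hca]; exact pow_padicValNat_dvd
          · rw [hca]; exact pow_succ_padicValNat_not_dvd hane
        have hmb : b % 2 ^ (c + 1) = 2 ^ c := by
          apply aux_mod_eq
          · rw [← hcb]; exact pow_padicValNat_dvd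
          · rw [← hcb]; exact pow_succ_padicValNat_not_dvd hbne
        exact hma.trans hmb.symm
      · -- c = k - 1, both divisible by 2^(k-1)
        have hca : c = k - 1 := by omega
        have hgb : k - 1 ≤ padicValNat 2 b := by
          rcases Nat.lt_or_ge (padicValNat 2 b) (k - 1) with h' | h' <;> omega
        refine ⟨2 ^ (k - 1), by rw [hca]; exact h2, ?_⟩
        have hda : 2 ^ (k - 1) ∣ a := (padicValNat_dvd_iff_le hane).mpr hge
        have hdb : 2 ^ (k - 1) ∣ b := (padicValNat_dvd_iff_le hbne).mpr hgb
        exact ((Nat.modEq_zero_iff_dvd).mpr hda).trans ((Nat.modEq_zero_iff_dvd).mpr hdb).symm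
    obtain ⟨m, hsm, hmod⟩ := key
    have hd : m ≤ Nat.dist a b := aux_modeq_le_dist hmod hab
    have hd' : Nat.dist a b = Nat.dist (u : ℕ) (v : ℕ) := by
      simp [Nat.dist]; omega
    have hsd : s c < Nat.dist (u : ℕ) (v : ℕ) := by omega
    calc (s c : ℕ∞) < (Nat.dist (u : ℕ) (v : ℕ) : ℕ∞) := by exact_mod_cast hsd
      _ ≤ (pathGraph n).edist u v := aux_dist_le_edist u v
  · ext c
    simp only [Set.mem_range, Set.mem_Iio]
    constructor
    · rintro ⟨i, rfl⟩
      refine lt_min (by omega) ?_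
      have h3 : padicValNat 2 ((i : ℕ) + 1) ≤ Nat.log 2 ((i : ℕ) + 1) :=
        padicValNat_le_nat_log _
      have h4 : Nat.log 2 ((i : ℕ) + 1) ≤ Nat.log 2 n :=
        Nat.log_mono_right (by omega)
      omega
    · intro hcm
      have hck : c < k := lt_of_lt_of_le hcm (min_le_left _ _)
      have hcl : c ≤ Nat.log 2 n := by
        have := lt_of_lt_of_le hcm (min_le_right _ _); omega
      have hpn : 2 ^ c ≤ n := Nat.pow_le_of_le_log (by omega) hcl
      have hpos : 0 < 2 ^ c := by positivity
      refine ⟨⟨2 ^ c - 1, by omega⟩, ?_⟩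
      have hval : (2 ^ c - 1) + 1 = 2 ^ c := by omega
      simp only [hval]
      rw [padicValNat.prime_pow]
      omega
end

section
/- Let S be a packing sequence with s_1 = 1, s_2 = 2, s_3 = 4, and s_4 = 7. If n ≥ 8 and n ≡ 0 (mod 8), then χ_S(C_n) = 4; the coloring repeating the pattern 1,2,1,3,1,2,1,4 around the cycle achieves this. -/
open SimpleGraph

set_option maxRecDepth 4000 in
private lemma pat17_key : ∀ a b : Fin 8, (![(0 : Fin 4), 1, 0, 2, 0, 1, 0, 3]) a = (![(0 : Fin 4), 1, 0, 2, 0, 1, 0, 3]) b →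
    (![2, 4, 8, 8] : Fin 4 → ℕ) ((![(0 : Fin 4), 1, 0, 2, 0, 1, 0, 3]) a) ∣ 8 ∧
    a.val % (![2, 4, 8, 8] : Fin 4 → ℕ) ((![(0 : Fin 4), 1, 0, 2, 0, 1, 0, 3]) a)
      = b.val % (![2, 4, 8, 8] : Fin 4 → ℕ) ((![(0 : Fin 4), 1, 0, 2, 0, 1, 0, 3]) a) := by
  decide

private def t3f : Fin 3 → ℕ
  | 0 => 1 | 1 => 2 | 2 => 4

set_option maxRecDepth 8000 in
set_option synthInstance.maxSize 2000 in
set_option synthInstance.maxHeartbeats 1000000 in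
private lemma word17 : ∀ a0 a1 a2 a3 a4 a5 a6 a7 : Fin 3,
    ¬((a0 = a1 → t3f a0 < 1) ∧
    (a0 = a2 → t3f a0 < 2) ∧
    (a0 = a3 → t3f a0 < 3) ∧
    (a0 = a4 → t3f a0 < 4) ∧
    (a1 = a2 → t3f a1 < 1) ∧
    (a1 = a3 → t3f a1 < 2) ∧
    (a1 = a4 → t3f a1 < 3) ∧
    (a1 = a5 → t3f a1 < 4) ∧
    (a2 = a3 → t3f a2 < 1) ∧
    (a2 = a4 → t3f a2 < 2) ∧
    (a2 = a5 → t3f a2 < 3) ∧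
    (a2 = a6 → t3f a2 < 4) ∧
    (a3 = a4 → t3f a3 < 1) ∧
    (a3 = a5 → t3f a3 < 2) ∧
    (a3 = a6 → t3f a3 < 3) ∧
    (a3 = a7 → t3f a3 < 4) ∧
    (a4 = a5 → t3f a4 < 1) ∧
    (a4 = a6 → t3f a4 < 2) ∧
    (a4 = a7 → t3f a4 < 3) ∧
    (a5 = a6 → t3f a5 < 1) ∧
    (a5 = a7 → t3f a5 < 2) ∧
    (a6 = a7 → t3f a6 < 1)) := by decide

private lemma modsplit (a n : ℕ) (h : a < 2 * n) :
    (a < n ∧ a % n = a) ∨ (n ≤ a ∧ a % n = a - n) := by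
  rcases Nat.lt_or_ge a n with h' | h'
  · exact Or.inl ⟨h', Nat.mod_eq_of_lt h'⟩
  · refine Or.inr ⟨h', ?_⟩
    rw [Nat.mod_eq_sub_mod h']
    exact Nat.mod_eq_of_lt (by omega)

/-- cyclic distance -/
private def cdist17 {n : ℕ} (u v : Fin n) : ℕ := min (v - u).val (u - v).val

private lemma sub_val_facts {n : ℕ} (x y : Fin n) :
    ((y.val ≤ x.val ∧ (x - y).val = x.val - y.val) ∨
      (x.val < y.val ∧ (x - y).val = x.val + n - y.val)) ∧ (x - y).val < n := by
  have hx := x.isLt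
  have hy := y.isLt
  have hval : (x - y).val = ((n - y.val) + x.val) % n := by rw [Fin.sub_def]
  have h2 := modsplit ((n - y.val) + x.val) n (by omega)
  have h3 : ((n - y.val) + x.val) % n < n := Nat.mod_lt _ (by omega)
  rw [hval]
  rcases h2 with ⟨hg, h⟩ | ⟨hg, h⟩ <;> rw [h] at h3 ⊢ <;> omega

private lemma cdist17_self {n : ℕ} (u : Fin n) : cdist17 u u = 0 := by
  have hu := u.isLt
  have hval : (u - u).val = ((n - u.val) + u.val) % n := by rw [Fin.sub_def]
  have he : (n - u.val) + u.val = n := by omega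
  unfold cdist17
  rw [hval, he, Nat.mod_self]
  simp

private lemma cdist17_triangle {n : ℕ} (u w v : Fin n) :
    cdist17 u v ≤ cdist17 u w + cdist17 w v := by
  have hu := u.isLt
  have hv := v.isLt
  have hw := w.isLt
  have h1 := sub_val_facts v u
  have h2 := sub_val_facts u v
  have h3 := sub_val_facts w u
  have h4 := sub_val_facts u w
  have h5 := sub_val_facts v w
  have h6 := sub_val_facts w v
  unfold cdist17
  omega

private lemma cdist17_adj {n : ℕ} {u w : Fin n} (h : (cycleGraph n).Adj u w) :
    cdist17 u w ≤ 1 := by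
  have hadj := cycleGraph_adj'.mp h
  unfold cdist17
  rcases hadj with h | h <;> omega

private lemma walk17 {n : ℕ} {u v : Fin n} (p : (cycleGraph n).Walk u v) :
    cdist17 u v ≤ p.length := by
  induction p with
  | nil => simp [cdist17_self]
  | @cons u w v h p ih =>
    have h1 := cdist17_adj h
    have h2 := cdist17_triangle u w v
    simp only [SimpleGraph.Walk.length_cons]
    omega

private lemma edist17_ge {n : ℕ} (u v : Fin n) :
    (cdist17 u v : ℕ∞) ≤ (cycleGraph n).edist u v := by
  refine le_iInf fun p => ?_
  exact_mod_cast walk17 p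

private lemma edist17_ub {n : ℕ} (hn : 2 ≤ n) :
    ∀ (d a : ℕ) (h : a + d < n),
      (cycleGraph n).edist ⟨a, by omega⟩ ⟨a + d, h⟩ ≤ d := by
  intro d
  induction d with
  | zero => intro a h; simp [SimpleGraph.edist_self]
  | succ d ih =>
    intro a h
    have h1 := ih a (by omega)
    have h2 : (cycleGraph n).Adj ⟨a + d, by omega⟩ ⟨a + d + 1, by omega⟩ := by
      rw [cycleGraph_adj']
      right
      show ((⟨a + d + 1, by omega⟩ : Fin n) - ⟨a + d, by omega⟩).val = 1
      rw [Fin.sub_def]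
      show ((n - (a + d)) + (a + d + 1)) % n = 1
      have e : (n - (a + d)) + (a + d + 1) = n + 1 := by omega
      rw [e, Nat.add_mod_left]
      exact Nat.mod_eq_of_lt (by omega)
    have h3 : (cycleGraph n).edist ⟨a + d, by omega⟩ ⟨a + d + 1, h⟩ = 1 :=
      SimpleGraph.edist_eq_one_iff_adj.mpr h2
    calc (cycleGraph n).edist ⟨a, by omega⟩ ⟨a + (d + 1), h⟩
        ≤ (cycleGraph n).edist ⟨a, by omega⟩ ⟨a + d, by omega⟩ +
          (cycleGraph n).edist ⟨a + d, by omega⟩ ⟨a + d + 1, h⟩ :=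
          SimpleGraph.edist_triangle
      _ ≤ (d : ℕ∞) + 1 := add_le_add h1 (le_of_eq h3)
      _ = ((d + 1 : ℕ) : ℕ∞) := by push_cast; ring

private lemma sc_lt17 (s : ℕ → ℕ) (h1 : s 0 = 1) (h2 : s 1 = 2) (h3 : s 2 = 4) (h4 : s 3 = 7) :
    ∀ c : Fin 4, s (c : ℕ) < (![2, 4, 8, 8] : Fin 4 → ℕ) c := by
  intro c
  fin_cases c <;> simp [h1, h2, h3, h4]

private lemma sval17 (s : ℕ → ℕ) (h1 : s 0 = 1) (h2 : s 1 = 2) (h3 : s 2 = 4) :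
    ∀ c : Fin 3, (![1, 2, 4] : Fin 3 → ℕ) c = s (c : ℕ) := by
  intro c
  fin_cases c <;> simp [h1, h2, h3]

set_option maxHeartbeats 1000000 in
theorem stmt17 (s : ℕ → ℕ) (hmono : Monotone s) (hpos : ∀ i, 1 ≤ s i)
    (h1 : s 0 = 1) (h2 : s 1 = 2) (h3 : s 2 = 4) (h4 : s 3 = 7)
    (n : ℕ) (hn : 8 ≤ n) (hmod : n % 8 = 0) :
    SPackingChromatic (cycleGraph n) s = 4 ∧
    IsSPackingColoring (cycleGraph n) s
      (fun i : Fin n =>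
        (![(0 : Fin 4), 1, 0, 2, 0, 1, 0, 3]) ⟨(i : ℕ) % 8, by omega⟩) := by
  have h8n : (8 : ℕ) ∣ n := Nat.dvd_of_mod_eq_zero hmod
  -- cyclic distance lower bound from congruences
  have key : ∀ (m : ℕ), 0 < m → m ∣ n → ∀ x y : Fin n,
      (x : ℕ) % m = (y : ℕ) % m → x ≠ y → m ≤ (y - x).val := by
    intro m hmpos hmn x y hxy hne
    obtain ⟨k, hk⟩ := hmn
    have hxn : (x : ℕ) < n := x.isLt
    have hh1 : (n + (y : ℕ)) % m = (y : ℕ) % m := by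
      have hgen : ∀ b : ℕ, (n + b) % m = b % m := by
        intro b
        rw [hk, Nat.mul_add_mod]
      exact hgen _
    have hmeq : (x : ℕ) ≡ n + (y : ℕ) [MOD m] := by
      show (x : ℕ) % m = (n + (y : ℕ)) % m
      rw [hh1, hxy]
    have hdvd' : m ∣ (n + (y : ℕ)) - (x : ℕ) :=
      (Nat.modEq_iff_dvd' (by omega)).mp hmeq
    have hdvd2 : m ∣ (y - x).val := by
      have hs : (y - x).val = ((n - (x : ℕ)) + (y : ℕ)) % n := by rw [Fin.sub_def]
      rw [hs, Nat.dvd_mod_iff ⟨k, hk⟩]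
      have e : (n - (x : ℕ)) + (y : ℕ) = (n + (y : ℕ)) - (x : ℕ) := by omega
      rw [e]; exact hdvd'
    have hpos : 0 < (y - x).val := by
      have hf := sub_val_facts y x
      have hx' := x.isLt
      have hy' := y.isLt
      have hvne : (x : ℕ) ≠ (y : ℕ) := fun h => hne (Fin.ext h)
      omega
    exact Nat.le_of_dvd hpos hdvd2
  -- the coloring is valid
  have main : ∀ u v : Fin n, u ≠ v → ∀ c : Fin 4,
      (![(0 : Fin 4), 1, 0, 2, 0, 1, 0, 3]) ⟨(u : ℕ) % 8, by omega⟩ = c →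
      (![(0 : Fin 4), 1, 0, 2, 0, 1, 0, 3]) ⟨(v : ℕ) % 8, by omega⟩ = c →
      (s (c : ℕ) : ℕ∞) < (cycleGraph n).edist u v := by
    intro u v huv c hcu hcv
    obtain ⟨hdvd8, hmodeq⟩ :=
      pat17_key ⟨(u : ℕ) % 8, by omega⟩ ⟨(v : ℕ) % 8, by omega⟩ (hcu.trans hcv.symm)
    rw [hcu] at hdvd8 hmodeq
    set m : ℕ := (![2, 4, 8, 8] : Fin 4 → ℕ) c with hm
    have hmn : m ∣ n := hdvd8.trans h8n
    have hmpos : 0 < m := Nat.pos_of_dvd_of_pos hdvd8 (by norm_num)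
    have hmu : (u : ℕ) % m = (v : ℕ) % m := by
      calc (u : ℕ) % m = (u : ℕ) % 8 % m := (Nat.mod_mod_of_dvd _ hdvd8).symm
        _ = (v : ℕ) % 8 % m := hmodeq
        _ = (v : ℕ) % m := Nat.mod_mod_of_dvd _ hdvd8
    have hcd : m ≤ cdist17 u v :=
      le_min (key m hmpos hmn u v hmu huv) (key m hmpos hmn v u hmu.symm huv.symm)
    have hsc : s (c : ℕ) < m := sc_lt17 s h1 h2 h3 h4 c
    calc (s (c : ℕ) : ℕ∞) < (m : ℕ∞) := by exact_mod_cast hsc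
      _ ≤ (cdist17 u v : ℕ∞) := by exact_mod_cast hcd
      _ ≤ (cycleGraph n).edist u v := edist17_ge u v
  have hcol : IsSPackingColoring (cycleGraph n) s
      (fun i : Fin n => (![(0 : Fin 4), 1, 0, 2, 0, 1, 0, 3]) ⟨(i : ℕ) % 8, by omega⟩) := by
    intro u v huv heq
    exact main u v huv _ rfl heq.symm
  refine ⟨?_, hcol⟩
  have mem4 : 4 ∈ {k | ∃ φ : Fin n → Fin k, IsSPackingColoring (cycleGraph n) s φ} :=
    ⟨_, hcol⟩
  refine le_antisymm (Nat.sInf_le mem4) (le_csInf ⟨4, mem4⟩ ?_)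
  rintro k ⟨φ, hφ⟩
  by_contra hk
  push_neg at hk
  have hk3 : k ≤ 3 := by omega
  have ht3f : ∀ c : Fin 3, t3f c = s (c : ℕ) := by
    intro c; fin_cases c <;> simp [t3f, h1, h2, h3]
  set ψ : Fin n → Fin 3 := fun i => Fin.castLE hk3 (φ i) with hψ
  set w : Fin 8 → Fin 3 := fun i => ψ ⟨i.val, by omega⟩ with hwdef
  have hpair : ∀ i j : Fin 8, i.val < j.val → w i = w j → t3f (w i) < j.val - i.val := by
    intro i j hij hw
    set x : Fin n := ⟨i.val, by omega⟩ with hx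
    set y : Fin n := ⟨j.val, by omega⟩ with hy
    have hxy : x ≠ y := by
      intro h
      rw [hx, hy] at h
      simp only [Fin.mk.injEq] at h
      omega
    have hφxy : φ x = φ y := Fin.castLE_inj.mp hw
    have hlt := hφ x y hxy hφxy
    have hub : (cycleGraph n).edist x y ≤ ((j.val - i.val : ℕ) : ℕ∞) := by
      have h' := edist17_ub (n := n) (by omega) (j.val - i.val) i.val (by omega)
      have e : i.val + (j.val - i.val) = j.val := by omega
      convert h' using 3 <;> omega
    have hval : t3f (w i) = s ((φ x : ℕ)) := by
      rw [ht3f (w i)]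
      rfl
    rw [hval]
    have := hlt.trans_le hub
    exact_mod_cast this
  exact word17 (w 0) (w 1) (w 2) (w 3) (w 4) (w 5) (w 6) (w 7)
    ⟨fun h => hpair 0 1 (by decide) h,
     fun h => hpair 0 2 (by decide) h,
     fun h => hpair 0 3 (by decide) h,
     fun h => hpair 0 4 (by decide) h,
     fun h => hpair 1 2 (by decide) h,
     fun h => hpair 1 3 (by decide) h,
     fun h => hpair 1 4 (by decide) h,
     fun h => hpair 1 5 (by decide) h,
     fun h => hpair 2 3 (by decide) h,
     fun h => hpair 2 4 (by decide) h,
     fun h => hpair 2 5 (by decide) h,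
     fun h => hpair 2 6 (by decide) h,
     fun h => hpair 3 4 (by decide) h,
     fun h => hpair 3 5 (by decide) h,
     fun h => hpair 3 6 (by decide) h,
     fun h => hpair 3 7 (by decide) h,
     fun h => hpair 4 5 (by decide) h,
     fun h => hpair 4 6 (by decide) h,
     fun h => hpair 4 7 (by decide) h,
     fun h => hpair 5 6 (by decide) h,
     fun h => hpair 5 7 (by decide) h,
     fun h => hpair 6 7 (by decide) h⟩
end

section
/- Let S be a packing sequence with s_1 = 1, s_2 = 3, s_3 = s_4 = 4. If n ≥ 8 can be written as n = 5k + 8m with k,m nonnegative integers, then χ_S(C_n) = 4. -/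
open SimpleGraph

/-! A colour class of an `S`-packing colouring of `C_n` whose colour has `s_i = d` is a set of
vertices at pairwise distance at least `d + 1`, so it has at most `n / (d + 1)` elements; with
only three colours this gives `n ≤ n/2 + n/4 + n/5 < n`. Conversely, in the concatenated block
word two equal colours `i` are always more than `s_i` steps apart, also across the seams between
blocks and around the end of the cycle, which is a finite check on residues. -/

open Finset Fin.CommRing

lemma Fin.val_sub_eq_ite {n : ℕ} (u v : Fin n) :
    (u - v).val = if v ≤ u then u.val - v.val else n + u.val - v.val := by
  split_ifs with h
  · exact Fin.sub_val_of_le h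
  · exact Fin.coe_sub_iff_lt.2 (not_le.1 h)

namespace SimpleGraph

lemma cycleGraph_edist_add_one_le {n : ℕ} [NeZero n] (u : Fin n) :
    (cycleGraph n).edist u (u + 1) ≤ 1 := by
  obtain _ | _ | n := n
  · exact absurd rfl (NeZero.ne 0)
  · rw [← Subsingleton.elim (α := Fin 1) u (u + 1), edist_self]; exact zero_le_one
  · exact (edist_eq_one_iff_adj.2 (cycleGraph_adj.2 (Or.inr (by simp)))).le

lemma cycleGraph_edist_add_natCast_le {n : ℕ} [NeZero n] (u : Fin n) (j : ℕ) :
    (cycleGraph n).edist u (u + j) ≤ j := by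
  induction j with
  | zero => simp
  | succ j ih =>
    calc (cycleGraph n).edist u (u + (j + 1 : ℕ))
        ≤ (cycleGraph n).edist u (u + j) + (cycleGraph n).edist (u + j) (u + j + 1) := by
          rw [Nat.cast_succ, ← add_assoc]; exact SimpleGraph.edist_triangle
      _ ≤ j + 1 := add_le_add ih (cycleGraph_edist_add_one_le _)

lemma cycleGraph_min_val_sub_le_length {n : ℕ} {u v : Fin n} (p : (cycleGraph n).Walk u v) :
    min (u - v).val (v - u).val ≤ p.length := by
  induction p with
  | nil => simp [Fin.val_sub_eq_ite]
  | @cons u w v hadj p ih =>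
    rw [Walk.length_cons]
    rw [cycleGraph_adj'] at hadj
    have := Fin.val_sub_eq_ite u w
    have := Fin.val_sub_eq_ite w u
    have := Fin.val_sub_eq_ite u v
    have := Fin.val_sub_eq_ite v u
    have := Fin.val_sub_eq_ite w v
    have := Fin.val_sub_eq_ite v w
    have := u.isLt; have := v.isLt; have := w.isLt
    simp only [Fin.le_def] at *
    split_ifs at * <;> omega

lemma cycleGraph_min_val_sub_le_edist {n : ℕ} (u v : Fin n) :
    ((min (u - v).val (v - u).val : ℕ) : ℕ∞) ≤ (cycleGraph n).edist u v := by
  rw [edist_eq_sInf]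
  refine le_sInf ?_
  rintro _ ⟨p, rfl⟩
  exact Nat.cast_le.2 <| cycleGraph_min_val_sub_le_length p

/-- The translates `x, x + 1, …, x + (d - 1)` of the points `x ∈ A` are pairwise distinct. -/
lemma card_mul_le_of_pairwise_le_cycleGraph_edist {n d : ℕ} [NeZero n] (hdn : d ≤ n)
    (A : Finset (Fin n)) (hA : (A : Set (Fin n)).Pairwise fun x y ↦ d ≤ (cycleGraph n).edist x y) :
    #A * d ≤ n := by
  have hinj : Set.InjOn (fun p : Fin n × ℕ ↦ p.1 + (p.2 : Fin n)) (A ×ˢ range d : Finset _) := by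
    suffices ∀ x ∈ A, ∀ y ∈ A, ∀ i < d, ∀ j ≤ i, x + i = y + j → x = y ∧ i = j by
      rintro ⟨x, i⟩ hx ⟨y, j⟩ hy hxy
      simp only [coe_product, Set.mem_prod, mem_coe, mem_range] at hx hy hxy
      rcases le_total j i with hji | hij
      · obtain ⟨rfl, rfl⟩ := this x hx.1 y hy.1 i hx.2 j hji hxy
        rfl
      · obtain ⟨rfl, rfl⟩ := this y hy.1 x hx.1 j hy.2 i hij hxy.symm
        rfl
    intro x hx y hy i hi j hji hxy
    have hy_eq : y = x + (i - j : ℕ) := by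
      rw [Nat.cast_sub hji]; linear_combination hxy.symm
    by_cases hxy' : x = y
    · subst hxy'
      refine ⟨rfl, ?_⟩
      have := congrArg Fin.val (add_left_cancel hxy)
      rwa [Fin.val_natCast, Fin.val_natCast, Nat.mod_eq_of_lt (by omega),
        Nat.mod_eq_of_lt (by omega)] at this
    · have hd := (hA hx hy hxy').trans (hy_eq ▸ cycleGraph_edist_add_natCast_le x (i - j))
      exact absurd (Nat.cast_le.1 hd) (by omega)
  calc #A * d = #(A ×ˢ range d) := by rw [card_product, card_range]
    _ ≤ #(univ : Finset (Fin n)) := card_le_card_of_injOn _ (fun _ _ ↦ mem_univ _) hinj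
    _ = n := card_fin n

end SimpleGraph

lemma IsSPackingColoring.castLE {V : Type*} {G : SimpleGraph V} {s : ℕ → ℕ} {j k : ℕ}
    (hjk : j ≤ k) {φ : V → Fin j} (hφ : IsSPackingColoring G s φ) :
    IsSPackingColoring G s (Fin.castLE hjk ∘ φ) :=
  fun u v huv h ↦ hφ u v huv (Fin.castLE_injective hjk h)

lemma sPackingChromatic_eq {V : Type*} {G : SimpleGraph V} {s : ℕ → ℕ} {k : ℕ}
    (hcol : ∃ φ : V → Fin (k + 1), IsSPackingColoring G s φ)
    (hnot : ∀ φ : V → Fin k, ¬IsSPackingColoring G s φ) :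
    SPackingChromatic G s = k + 1 := by
  refine le_antisymm (Nat.sInf_le hcol) (le_csInf ⟨_, hcol⟩ ?_)
  rintro j ⟨φ, hφ⟩
  by_contra! hj
  exact hnot _ (hφ.castLE (Nat.lt_succ_iff.1 hj))

lemma IsSPackingColoring.card_fiber_mul_le_cycleGraph {n k : ℕ} {s : ℕ → ℕ} {φ : Fin n → Fin k}
    (hφ : IsSPackingColoring (cycleGraph n) s φ) (c : Fin k) (hc : s c + 1 ≤ n) :
    #{x | φ x = c} * (s c + 1) ≤ n := by
  have : NeZero n := ⟨by omega⟩
  refine card_mul_le_of_pairwise_le_cycleGraph_edist hc _ fun x hx y hy hxy ↦ ?_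
  simp only [coe_filter, mem_univ, true_and] at hx hy
  have := hφ x y hxy (hx.trans hy.symm)
  rw [hx] at this
  exact Order.add_one_le_of_lt (by exact_mod_cast this)

lemma not_isSPackingColoring_cycleGraph_fin_three {s : ℕ → ℕ}
    (h1 : s 0 = 1) (h2 : s 1 = 3) (h3 : s 2 = 4) {n : ℕ} (hn : 5 ≤ n) (φ : Fin n → Fin 3) :
    ¬IsSPackingColoring (cycleGraph n) s φ := by
  intro hφ
  have hsum : n = ∑ c : Fin 3, #{x | φ x = c} := by
    simpa using card_eq_sum_card_fiberwise (f := φ) (s := univ) (t := univ) (by simp)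
  have c0 := hφ.card_fiber_mul_le_cycleGraph 0 (by simp [h1]; omega)
  have c1 := hφ.card_fiber_mul_le_cycleGraph 1 (by simp [h2]; omega)
  have c2 := hφ.card_fiber_mul_le_cycleGraph 2 (by simp [h3]; omega)
  simp only [Fin.sum_univ_three] at hsum
  simp only [Fin.val_zero, Fin.val_one, Fin.val_two, h1, h2, h3] at c0 c1 c2
  omega

lemma isSPackingColoring_cycleGraph_of_forall_add {n k : ℕ} [NeZero n] {s : ℕ → ℕ}
    {φ : Fin n → Fin k} (h : ∀ u : Fin n, ∀ j : ℕ, 0 < j → j ≤ s (φ u) → φ (u + j) ≠ φ u) :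
    IsSPackingColoring (cycleGraph n) s φ := by
  have forward : ∀ u v : Fin n, u ≠ v → φ u = φ v → s (φ u) < (v - u).val := by
    intro u v huv hφ
    by_contra! hle
    have hpos : 0 < (v - u).val := Fin.pos_iff_ne_zero.2 (sub_ne_zero.2 huv.symm)
    exact h u _ hpos hle (by rwa [Fin.cast_val_eq_self, add_sub_cancel, eq_comm])
  intro u v huv hφ
  refine lt_of_lt_of_le ?_ (cycleGraph_min_val_sub_le_edist u v)
  exact Nat.cast_lt.2 (lt_min (hφ ▸ forward v u huv.symm hφ.symm) (forward u v huv hφ))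

/-- Position `a` of the cyclic word made of `k` blocks `1,3,2,1,4` followed by blocks
`1,2,1,3,1,2,1,4`, with colors shifted down by one. -/
def blockColoring (k a : ℕ) : ℕ :=
  if a < 5 * k then
    (if a % 5 = 1 then 2 else if a % 5 = 2 then 1 else if a % 5 = 4 then 3 else 0)
  else
    (if (a - 5 * k) % 8 = 1 then 1 else if (a - 5 * k) % 8 = 3 then 2
      else if (a - 5 * k) % 8 = 5 then 1 else if (a - 5 * k) % 8 = 7 then 3 else 0)

lemma blockColoring_lt_four (k a : ℕ) : blockColoring k a < 4 := by
  unfold blockColoring; split_ifs <;> omega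

lemma blockColoring_add_ne {k a j : ℕ} (hj0 : 0 < j) (hj4 : j ≤ 4)
    (hc0 : blockColoring k a = 0 → j ≤ 1) (hc1 : blockColoring k a = 1 → j ≤ 3) :
    blockColoring k (a + j) ≠ blockColoring k a := by
  unfold blockColoring at hc0 hc1 ⊢
  by_cases hak : a < 5 * k <;> by_cases hbk : a + j < 5 * k <;>
    simp only [hak, hbk, if_true, if_false] at hc0 hc1 ⊢ <;>
  split_ifs at hc0 hc1 ⊢ <;> omega

lemma blockColoring_add_sub_ne {n k m a j : ℕ} (hkm : n = 5 * k + 8 * m) (ha : a < n)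
    (hle : n ≤ a + j) (hj0 : 0 < j) (hj4 : j ≤ 4)
    (hc0 : blockColoring k a = 0 → j ≤ 1) (hc1 : blockColoring k a = 1 → j ≤ 3) :
    blockColoring k (a + j - n) ≠ blockColoring k a := by
  unfold blockColoring at hc0 hc1 ⊢
  by_cases hak : a < 5 * k <;> by_cases hbk : a + j - n < 5 * k <;>
    simp only [hak, hbk, if_true, if_false] at hc0 hc1 ⊢ <;>
  split_ifs at hc0 hc1 ⊢ <;> omega

lemma blockColoring_add_mod_ne {s : ℕ → ℕ}
    (h1 : s 0 = 1) (h2 : s 1 = 3) (h3 : s 2 = 4) (h4 : s 3 = 4)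
    {n k m a j : ℕ} (hn : 5 ≤ n) (hkm : n = 5 * k + 8 * m) (ha : a < n) (hj0 : 0 < j)
    (hj : j ≤ s (blockColoring k a)) :
    blockColoring k ((a + j) % n) ≠ blockColoring k a := by
  have hj4 : j ≤ 4 := by
    have := blockColoring_lt_four k a
    interval_cases h : blockColoring k a <;> simp_all <;> omega
  have hc0 : blockColoring k a = 0 → j ≤ 1 := fun h ↦ by rwa [h, h1] at hj
  have hc1 : blockColoring k a = 1 → j ≤ 3 := fun h ↦ by rwa [h, h2] at hj
  by_cases hlt : a + j < n
  · rw [Nat.mod_eq_of_lt hlt]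
    exact blockColoring_add_ne hj0 hj4 hc0 hc1
  · rw [Nat.mod_eq_sub_mod (by omega), Nat.mod_eq_of_lt (by omega)]
    exact blockColoring_add_sub_ne hkm ha (by omega) hj0 hj4 hc0 hc1

lemma exists_isSPackingColoring_cycleGraph_fin_four {s : ℕ → ℕ}
    (h1 : s 0 = 1) (h2 : s 1 = 3) (h3 : s 2 = 4) (h4 : s 3 = 4)
    {n k m : ℕ} (hn : 5 ≤ n) (hkm : n = 5 * k + 8 * m) :
    ∃ φ : Fin n → Fin 4, IsSPackingColoring (cycleGraph n) s φ := by
  have : NeZero n := ⟨by omega⟩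
  refine ⟨fun x ↦ ⟨blockColoring k x, blockColoring_lt_four k x⟩,
    isSPackingColoring_cycleGraph_of_forall_add fun u j hj0 hj ↦ ?_⟩
  rw [ne_eq, Fin.ext_iff]
  show blockColoring k (u + (j : Fin n)).val ≠ blockColoring k u
  rw [Fin.val_add, Fin.val_natCast, Nat.add_mod_mod]
  exact blockColoring_add_mod_ne h1 h2 h3 h4 hn hkm u.isLt hj0 hj

theorem stmt18_general (s : ℕ → ℕ)
    (h1 : s 0 = 1) (h2 : s 1 = 3) (h3 : s 2 = 4) (h4 : s 3 = 4)
    (n k m : ℕ) (hn : 8 ≤ n) (hkm : n = 5 * k + 8 * m) :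
    SPackingChromatic (cycleGraph n) s = 4 :=
  sPackingChromatic_eq (exists_isSPackingColoring_cycleGraph_fin_four h1 h2 h3 h4 (by omega) hkm)
    (not_isSPackingColoring_cycleGraph_fin_three h1 h2 h3 (by omega))

theorem stmt18 (s : ℕ → ℕ) (hmono : Monotone s) (hpos : ∀ i, 1 ≤ s i)
    (h1 : s 0 = 1) (h2 : s 1 = 3) (h3 : s 2 = 4) (h4 : s 3 = 4)
    (n k m : ℕ) (hn : 8 ≤ n) (hkm : n = 5 * k + 8 * m) :
    SPackingChromatic (cycleGraph n) s = 4 :=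
  stmt18_general s h1 h2 h3 h4 n k m hn hkm
end

section
/- Let S be a packing sequence with s_1 = 1, s_2 ∈ {2,3}, and s_3, s_4 ∈ {4,5,6,7} (so S ∈ S(4)). Then for every n ≥ 3, the cycle C_n is χ_S-vertex-critical if and only if n ∈ {4, 8} or C_n is χ_S-critical. -/
open SimpleGraph

/-!
Deleting a vertex from `C_n` leaves `P_{n-1}`, deleting an edge leaves a subgraph of `P_n`, and
`P_n ⊆ C_n`. Hence a vertex-critical cycle is critical once `χ_S(P_n) ≤ χ_S(P_{n-1})`, while `C_n`
is vertex-critical as soon as `χ_S(P_{n-1}) < χ_S(P_n)`; a critical graph is always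
vertex-critical. For `S ∈ S(4)`, colouring vertex `a` of a path by the 2-adic valuation of `a + 1`
(capped at `3`) gives `χ_S(P_n) ≤ min 4 (⌊log₂ n⌋ + 1)`, and a halving argument shows that
`P_{2^k}` needs more than `k` colours; so `χ_S(P_n)` grows exactly at `n = 2, 4, 8`.
-/

lemma odd_of_two_pow_mul_not_dvd {i a : ℕ} (h : ¬ 2 ^ (i + 1) ∣ 2 ^ i * a) : Odd a := by
  rw [← Nat.not_even_iff_odd, even_iff_two_dvd]
  rintro ⟨c, rfl⟩
  exact h ⟨c, by ring⟩

lemma two_pow_succ_le_sub {i x y : ℕ} (hxy : x < y) (hx : 2 ^ i ∣ x) (hy : 2 ^ i ∣ y)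
    (hx' : ¬ 2 ^ (i + 1) ∣ x) (hy' : ¬ 2 ^ (i + 1) ∣ y) : 2 ^ (i + 1) ≤ y - x := by
  obtain ⟨a, rfl⟩ := hx
  obtain ⟨b, rfl⟩ := hy
  obtain ⟨c, hc⟩ := (Nat.Odd.sub_odd (odd_of_two_pow_mul_not_dvd hy')
    (odd_of_two_pow_mul_not_dvd hx')).two_dvd
  refine Nat.le_of_dvd (by omega) ⟨c, ?_⟩
  rw [← Nat.mul_sub, hc]
  ring

lemma two_pow_le_sub {i x y : ℕ} (hxy : x < y) (hx : 2 ^ i ∣ x) (hy : 2 ^ i ∣ y) :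
    2 ^ i ≤ y - x :=
  Nat.le_of_dvd (by omega) (Nat.dvd_sub hy hx)

lemma two_pow_padicValNat_succ_le_sub {x y : ℕ} (hx : x ≠ 0) (hxy : x < y)
    (h : padicValNat 2 x = padicValNat 2 y) : 2 ^ (padicValNat 2 x + 1) ≤ y - x :=
  two_pow_succ_le_sub hxy pow_padicValNat_dvd (h ▸ pow_padicValNat_dvd)
    (pow_succ_padicValNat_not_dvd hx) (h ▸ pow_succ_padicValNat_not_dvd (by omega))

lemma exists_close_pair_of_forall_lt (k a : ℕ) (c : ℕ → ℕ)
    (hc : ∀ i, a ≤ i → i < a + 2 ^ k → c i < k) :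
    ∃ i j, a ≤ i ∧ i < j ∧ j < a + 2 ^ k ∧ c i = c j ∧ j - i ≤ 2 ^ c i := by
  induction k generalizing a with
  | zero => exact absurd (hc a le_rfl (by simp)) (Nat.not_lt_zero _)
  | succ k ih =>
    rw [pow_succ] at hc ⊢
    by_contra! hfar
    -- If colour `k` occurs at `p` in the first half, it does not occur among the `2 ^ k`
    -- positions after `p`.
    obtain ⟨b, hab, hba, hb⟩ : ∃ b, a ≤ b ∧ b ≤ a + 2 ^ k ∧
        ∀ i, b ≤ i → i < b + 2 ^ k → c i ≠ k := by
      by_cases hp : ∃ p, a ≤ p ∧ p < a + 2 ^ k ∧ c p = k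
      · obtain ⟨p, hap, hpa, hpk⟩ := hp
        refine ⟨p + 1, by omega, by omega, fun i hpi hi hik => ?_⟩
        have := hfar p i hap (by omega) (by omega) (hpk.trans hik.symm)
        rw [hpk] at this
        omega
      · push Not at hp
        exact ⟨a, le_rfl, Nat.le_add_right _ _, fun i hai hi => hp i hai (by omega)⟩
    obtain ⟨i, j, hbi, hij, hj, hcij, hle⟩ := ih b fun i hbi hi =>
      (Nat.lt_succ_iff.mp (hc i (by omega) (by omega))).lt_of_ne (hb i hbi hi)
    exact (hfar i j (by omega) hij (by omega) hcij).not_ge hle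

lemma Fin.val_sub_cases {n : ℕ} (u w : Fin n) :
    ((w : ℕ) ≤ u ∧ (u - w : Fin n).val = u - w) ∨
      ((u : ℕ) < w ∧ (u - w : Fin n).val = n + u - w) := by
  rcases le_or_gt w u with h | h
  · exact .inl ⟨h, Fin.coe_sub_iff_le.mpr h⟩
  · exact .inr ⟨h, Fin.coe_sub_iff_lt.mpr h⟩

lemma Fin.val_sub_eq_pred_iff {n : ℕ} [NeZero n] {a b x : Fin n} (hab : (b - a : Fin n).val = 1) :
    (x - b : Fin n).val = n - 1 ↔ x = a := by
  have hab' : (a - b : Fin n).val = n - 1 := by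
    have := a.2; have := b.2
    have := Fin.val_sub_cases b a
    have := Fin.val_sub_cases a b
    omega
  refine ⟨fun hx => by simpa using Fin.ext (hx.trans hab'.symm), ?_⟩
  rintro rfl
  exact hab'

lemma Fin.eq_of_val_sub_eq_zero {n : ℕ} [NeZero n] {b x : Fin n} (hx : (x - b : Fin n).val = 0) :
    x = b :=
  sub_eq_zero.mp (Fin.ext (by simpa using hx))

namespace SimpleGraph

section General

variable {V W : Type*} {G : SimpleGraph V} {G' : SimpleGraph W} {s : ℕ → ℕ}

lemma Hom.edist_le (f : G →g G') (u v : V) : G'.edist (f u) (f v) ≤ G.edist u v :=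
  le_iInf fun p => (SimpleGraph.edist_le (p.map f)).trans_eq (by rw [Walk.length_map])

lemma IsSPackingColoring.sPackingChromatic_le {k : ℕ} {φ : V → Fin k}
    (h : IsSPackingColoring G s φ) : SPackingChromatic G s ≤ k :=
  Nat.sInf_le ⟨φ, h⟩

lemma IsSPackingColoring.castLE {k l : ℕ} (hkl : k ≤ l) {φ : V → Fin k}
    (h : IsSPackingColoring G s φ) : IsSPackingColoring G s (Fin.castLE hkl ∘ φ) :=
  fun u v huv heq => h u v huv (Fin.castLE_injective hkl heq)

lemma exists_isSPackingColoring [Finite V] (G : SimpleGraph V) (s : ℕ → ℕ) :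
    ∃ k, ∃ φ : V → Fin k, IsSPackingColoring G s φ := by
  obtain ⟨k, ⟨e⟩⟩ := Finite.exists_equiv_fin V
  exact ⟨k, e, fun u v huv heq => absurd (e.injective heq) huv⟩

lemma exists_isSPackingColoring_sPackingChromatic [Finite V] (G : SimpleGraph V) (s : ℕ → ℕ) :
    ∃ φ : V → Fin (SPackingChromatic G s), IsSPackingColoring G s φ :=
  Nat.sInf_mem (exists_isSPackingColoring G s)

lemma lt_sPackingChromatic [Finite V] {k : ℕ}
    (h : ∀ φ : V → Fin k, ¬ IsSPackingColoring G s φ) : k < SPackingChromatic G s := by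
  by_contra! hle
  obtain ⟨φ, hφ⟩ := exists_isSPackingColoring_sPackingChromatic G s
  exact h _ (hφ.castLE hle)

lemma IsContained.sPackingChromatic_le [Finite W] (h : G ⊑ G') :
    SPackingChromatic G s ≤ SPackingChromatic G' s := by
  obtain ⟨f⟩ := h
  obtain ⟨φ, hφ⟩ := exists_isSPackingColoring_sPackingChromatic G' s
  refine IsSPackingColoring.sPackingChromatic_le (φ := φ ∘ f) fun u v huv heq => ?_
  exact (hφ _ _ (f.injective.ne huv) heq).trans_le (f.toHom.edist_le u v)

lemma Iso.sPackingChromatic_eq [Finite V] [Finite W] (e : G ≃g G') :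
    SPackingChromatic G s = SPackingChromatic G' s :=
  le_antisymm e.isContained.sPackingChromatic_le e.symm.isContained.sPackingChromatic_le

lemma Subgraph.coe_isContained_induce (H : G.Subgraph) {t : Set V} (h : H.verts ⊆ t) :
    H.coe ⊑ G.induce t :=
  ⟨⟨⟨fun x => ⟨x, h x.2⟩, fun hxy => H.adj_sub hxy⟩,
    fun _ _ hxy => Subtype.ext (Subtype.mk.inj hxy)⟩⟩

lemma Subgraph.exists_notMem_verts_or_not_adj {H : G.Subgraph} (hH : H ≠ ⊤) :
    (∃ v, v ∉ H.verts) ∨ ∃ a b, G.Adj a b ∧ ¬ H.Adj a b := by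
  by_contra! h
  refine hH (Subgraph.ext (Set.eq_univ_of_forall h.1) ?_)
  ext a b
  exact ⟨fun hab => hab.adj_sub, fun hab => h.2 a b hab⟩

lemma SCritical.sVertexCritical [Finite V] (h : SCritical G s) : SVertexCritical G s := by
  intro v
  let H : G.Subgraph := (⊤ : G.Subgraph).induce {u | u ≠ v}
  have hH : H ≠ ⊤ := fun hH => (show v ∈ H.verts from hH ▸ trivial) rfl
  have hcopy : G.induce {u | u ≠ v} ⊑ H.coe :=
    ⟨⟨⟨fun x => ⟨x, x.2⟩, fun {a b} hxy => ⟨a.2, b.2, hxy⟩⟩,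
      fun _ _ hxy => Subtype.ext (Subtype.mk.inj hxy)⟩⟩
  exact hcopy.sPackingChromatic_le.trans_lt (h H hH)

end General

section Path

variable {m k : ℕ} {s : ℕ → ℕ}

lemma Walk.dist_le_length_pathGraph {u v : Fin m} (p : (pathGraph m).Walk u v) :
    Nat.dist u v ≤ p.length := by
  induction p with
  | nil => simp
  | cons hadj _ ih =>
    rw [pathGraph_adj] at hadj
    rw [Walk.length_cons]
    unfold Nat.dist at *
    omega

lemma pathGraph_edist_le_of_val_add {u v : Fin m} {d : ℕ} (h : (u : ℕ) + d = v) :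
    (pathGraph m).edist u v ≤ d := by
  induction d generalizing v with
  | zero => simp [show u = v from Fin.ext h]
  | succ d ih =>
    let w : Fin m := ⟨u + d, by omega⟩
    have hwv : (pathGraph m).Adj w v := pathGraph_adj.mpr (.inl (by simp [w]; omega))
    calc (pathGraph m).edist u v ≤ (pathGraph m).edist u w + (pathGraph m).edist w v :=
          SimpleGraph.edist_triangle
      _ ≤ d + 1 := by gcongr; exacts [ih rfl, (edist_eq_one_iff_adj.mpr hwv).le]
      _ = (d + 1 : ℕ) := by push_cast; rfl

lemma pathGraph_edist (u v : Fin m) : (pathGraph m).edist u v = Nat.dist u v := by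
  refine le_antisymm ?_ (le_iInf fun p => by exact_mod_cast p.dist_le_length_pathGraph)
  rcases le_total (u : ℕ) v with h | h
  · exact pathGraph_edist_le_of_val_add (by unfold Nat.dist; omega)
  · rw [edist_comm]
    exact pathGraph_edist_le_of_val_add (by unfold Nat.dist; omega)

lemma pathGraph_isContained_pathGraph {m' : ℕ} (h : m ≤ m') : pathGraph m ⊑ pathGraph m' :=
  ⟨⟨⟨Fin.castLE h, fun hxy => by simpa [pathGraph_adj] using hxy⟩, Fin.castLE_injective h⟩⟩

lemma isSPackingColoring_pathGraph (f : ℕ → ℕ) (hf : ∀ a < m, f a < k)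
    (hgap : ∀ a b, a < b → b < m → f a = f b → s (f a) < b - a) :
    IsSPackingColoring (pathGraph m) s fun u => ⟨f u, hf u u.2⟩ := by
  intro u v huv heq
  simp only [Fin.mk.injEq] at heq
  change (s (f u) : ℕ∞) < _
  rw [pathGraph_edist, Nat.cast_lt]
  rcases lt_or_gt_of_ne (Fin.val_ne_of_ne huv) with h | h
  · have := hgap u v h v.2 heq
    unfold Nat.dist; omega
  · have := hgap v u h u.2 heq.symm
    rw [← heq] at this
    unfold Nat.dist; omega

lemma sPackingChromatic_pathGraph_le_of_lt_two_pow (hs : ∀ i < k, s i < 2 ^ (i + 1))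
    (hm : m < 2 ^ k) : SPackingChromatic (pathGraph m) s ≤ k := by
  have hlt : ∀ a < m, padicValNat 2 (a + 1) < k := fun a ha =>
    (Nat.pow_lt_pow_iff_right (by norm_num)).mp
      ((Nat.le_of_dvd (by omega : 0 < a + 1) pow_padicValNat_dvd).trans_lt (by omega))
  refine (isSPackingColoring_pathGraph (fun a => padicValNat 2 (a + 1)) hlt
    fun a b hab hb heq => ?_).sPackingChromatic_le
  refine (hs _ (hlt a (by omega))).trans_le ?_
  have := two_pow_padicValNat_succ_le_sub (by omega) (by omega : a + 1 < b + 1) heq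
  omega

lemma sPackingChromatic_pathGraph_le (hs : ∀ i < k, s i < 2 ^ (i + 1)) (hk : s k < 2 ^ k) :
    SPackingChromatic (pathGraph m) s ≤ k + 1 := by
  refine (isSPackingColoring_pathGraph (fun a => min k (padicValNat 2 (a + 1)))
    (fun a _ => Nat.lt_succ_of_le (min_le_left _ _)) fun a b hab hb heq => ?_).sPackingChromatic_le
  rcases lt_or_ge (padicValNat 2 (a + 1)) k with ha | ha
  · have hb : padicValNat 2 (b + 1) = padicValNat 2 (a + 1) := by omega
    rw [min_eq_right ha.le]
    refine (hs _ ha).trans_le ?_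
    have := two_pow_padicValNat_succ_le_sub (by omega) (by omega : a + 1 < b + 1) hb.symm
    omega
  · have hb : k ≤ padicValNat 2 (b + 1) := by omega
    rw [min_eq_left ha]
    refine hk.trans_le ?_
    have := two_pow_le_sub (by omega : a + 1 < b + 1)
      ((pow_dvd_pow 2 ha).trans pow_padicValNat_dvd) ((pow_dvd_pow 2 hb).trans pow_padicValNat_dvd)
    omega

lemma lt_sPackingChromatic_pathGraph_two_pow (hs : ∀ i < k, 2 ^ i ≤ s i) :
    k < SPackingChromatic (pathGraph (2 ^ k)) s := by
  refine lt_sPackingChromatic fun φ hφ => ?_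
  let c : ℕ → ℕ := fun i => if h : i < 2 ^ k then φ ⟨i, h⟩ else 0
  obtain ⟨i, j, -, hij, hj, hcij, hle⟩ :=
    exists_close_pair_of_forall_lt k 0 c fun i _ hi => by rw [zero_add] at hi; simp [c, hi]
  have hi : i < 2 ^ k := by omega
  have hj : j < 2 ^ k := by omega
  simp only [c, hi, hj, dite_true] at hcij hle
  have hfar := hφ ⟨i, hi⟩ ⟨j, hj⟩ (Fin.ne_of_val_ne hij.ne) (Fin.ext hcij)
  rw [pathGraph_edist, Nat.cast_lt] at hfar
  change _ < Nat.dist i j at hfar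
  rw [Nat.dist_eq_sub_of_le hij.le] at hfar
  have := hs _ (φ ⟨i, hi⟩).2
  omega

lemma sPackingChromatic_pathGraph_le_pred {n : ℕ}
    (hs : ∀ i < 3, 2 ^ i ≤ s i ∧ s i < 2 ^ (i + 1)) (hs3 : s 3 < 2 ^ 3)
    (hn : 3 ≤ n) (hn4 : n ≠ 4) (hn8 : n ≠ 8) :
    SPackingChromatic (pathGraph n) s ≤ SPackingChromatic (pathGraph (n - 1)) s := by
  have hup (k : ℕ) (hk : k ≤ 3) : ∀ i < k, s i < 2 ^ (i + 1) := fun i hi => (hs i (by omega)).2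
  have hlow (k : ℕ) (hk : k ≤ 3) : ∀ i < k, 2 ^ i ≤ s i := fun i hi => (hs i (by omega)).1
  rcases (by omega : n = 3 ∨ 5 ≤ n ∧ n ≤ 7 ∨ 9 ≤ n) with rfl | ⟨h5, h7⟩ | h9
  · calc SPackingChromatic (pathGraph 3) s ≤ 2 :=
          sPackingChromatic_pathGraph_le_of_lt_two_pow (hup 2 (by norm_num)) (by norm_num)
      _ ≤ SPackingChromatic (pathGraph 2) s :=
          lt_sPackingChromatic_pathGraph_two_pow (k := 1) (hlow 1 (by norm_num))
  · calc SPackingChromatic (pathGraph n) s ≤ 3 :=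
          sPackingChromatic_pathGraph_le_of_lt_two_pow (hup 3 le_rfl) (by omega)
      _ ≤ SPackingChromatic (pathGraph 4) s :=
          lt_sPackingChromatic_pathGraph_two_pow (k := 2) (hlow 2 (by norm_num))
      _ ≤ SPackingChromatic (pathGraph (n - 1)) s :=
          (pathGraph_isContained_pathGraph (by omega)).sPackingChromatic_le
  · calc SPackingChromatic (pathGraph n) s ≤ 4 :=
          sPackingChromatic_pathGraph_le (k := 3) (hup 3 le_rfl) hs3
      _ ≤ SPackingChromatic (pathGraph 8) s :=
          lt_sPackingChromatic_pathGraph_two_pow (k := 3) (hlow 3 le_rfl)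
      _ ≤ SPackingChromatic (pathGraph (n - 1)) s :=
          (pathGraph_isContained_pathGraph (by omega)).sPackingChromatic_le

end Path

section Cycle

variable {n : ℕ} {s : ℕ → ℕ}

lemma sPackingChromatic_pathGraph_le_cycleGraph :
    SPackingChromatic (pathGraph n) s ≤ SPackingChromatic (cycleGraph n) s :=
  (IsContained.of_le pathGraph_le_cycleGraph).sPackingChromatic_le

variable [NeZero n]

lemma cycleGraph_adj_sub_iff {x y b : Fin n} :
    (cycleGraph n).Adj (x - b) (y - b) ↔ (cycleGraph n).Adj x y := by
  simp only [cycleGraph_adj', sub_sub_sub_cancel_right]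

/-- Cutting the cycle at the edge `{a, b}` and numbering the vertices from `b` onwards turns
every other edge of the cycle into an edge of the path. -/
lemma pathGraph_adj_sub_of_cycleGraph_adj {a b x y : Fin n} (hab : (b - a : Fin n).val = 1)
    (hxy : (cycleGraph n).Adj x y) (hne : s(x, y) ≠ s(a, b)) :
    (pathGraph n).Adj (x - b) (y - b) := by
  rw [← cycleGraph_adj_sub_iff (b := b), cycleGraph_adj'] at hxy
  rw [pathGraph_adj]
  have := (x - b).2; have := (y - b).2
  rcases hxy with h | h
  · rcases Fin.val_sub_cases (x - b) (y - b) with ⟨-, h'⟩ | ⟨-, h'⟩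
    · omega
    · refine absurd ?_ hne
      rw [Fin.eq_of_val_sub_eq_zero (x := x) (b := b) (by omega),
        (Fin.val_sub_eq_pred_iff (x := y) hab).mp (by omega), Sym2.eq_swap]
  · rcases Fin.val_sub_cases (y - b) (x - b) with ⟨-, h'⟩ | ⟨-, h'⟩
    · omega
    · refine absurd ?_ hne
      rw [Fin.eq_of_val_sub_eq_zero (x := y) (b := b) (by omega),
        (Fin.val_sub_eq_pred_iff (x := x) hab).mp (by omega)]

def cycleGraphInduceNeIso (hn : 2 ≤ n) (v : Fin n) :
    (cycleGraph n).induce {u | u ≠ v} ≃g pathGraph (n - 1) :=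
  have hv : ((v + 1 - v : Fin n) : ℕ) = 1 := by
    rw [add_sub_cancel_left, Fin.val_one', Nat.mod_eq_of_lt hn]
  have hne {x : Fin n} : x ≠ v ↔ (x - (v + 1) : Fin n).val < n - 1 := by
    rw [Ne, ← Fin.val_sub_eq_pred_iff hv]
    have := (x - (v + 1)).2
    omega
  { toFun x := ⟨(x.1 - (v + 1) : Fin n).val, hne.mp x.2⟩
    invFun i := ⟨Fin.castLE (by omega) i + (v + 1), hne.mpr (by simp)⟩
    left_inv x := by ext; simp
    right_inv i := by ext; simp
    map_rel_iff' {x y} := by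
      change (pathGraph (n - 1)).Adj ⟨_, _⟩ ⟨_, _⟩ ↔ (cycleGraph n).Adj x y
      rw [pathGraph_adj, ← pathGraph_adj (n := n)]
      refine ⟨fun h => cycleGraph_adj_sub_iff.mp (pathGraph_le_cycleGraph h),
        fun h => pathGraph_adj_sub_of_cycleGraph_adj hv h fun hxy => ?_⟩
      have := Sym2.mem_mk_left v (v + 1)
      rw [← hxy, Sym2.mem_iff] at this
      exact this.elim (fun h => x.2 h.symm) fun h => y.2 h.symm }

lemma sPackingChromatic_cycleGraph_induce_ne (hn : 2 ≤ n) (v : Fin n) :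
    SPackingChromatic ((cycleGraph n).induce {u | u ≠ v}) s =
      SPackingChromatic (pathGraph (n - 1)) s :=
  (cycleGraphInduceNeIso hn v).sPackingChromatic_eq

lemma Subgraph.coe_isContained_pathGraph_of_not_adj {H : (cycleGraph n).Subgraph} {a b : Fin n}
    (hab : (cycleGraph n).Adj a b) (hH : ¬ H.Adj a b) : H.coe ⊑ pathGraph n := by
  wlog hba : (b - a : Fin n).val = 1 generalizing a b
  · exact this hab.symm (fun h => hH h.symm) ((cycleGraph_adj'.mp hab).resolve_right hba)
  refine ⟨⟨⟨fun x => x.1 - b, fun {x y} hxy => ?_⟩,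
    fun x y hxy => Subtype.ext (by simpa using hxy)⟩⟩
  refine pathGraph_adj_sub_of_cycleGraph_adj hba (H.adj_sub hxy) fun he => hH ?_
  rcases Sym2.eq_iff.mp he with ⟨rfl, rfl⟩ | ⟨rfl, rfl⟩
  exacts [hxy, hxy.symm]

lemma SVertexCritical.sCritical_cycleGraph (hn : 2 ≤ n) (h : SVertexCritical (cycleGraph n) s)
    (hpath : SPackingChromatic (pathGraph n) s ≤ SPackingChromatic (pathGraph (n - 1)) s) :
    SCritical (cycleGraph n) s := by
  intro H hH
  rcases Subgraph.exists_notMem_verts_or_not_adj hH with ⟨v, hv⟩ | ⟨a, b, hab, hHab⟩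
  · have hsub : H.verts ⊆ {u | u ≠ v} := fun u hu (huv : u = v) => hv (huv ▸ hu)
    exact (H.coe_isContained_induce hsub).sPackingChromatic_le.trans_lt (h v)
  · calc SPackingChromatic H.coe s ≤ SPackingChromatic (pathGraph n) s :=
          (Subgraph.coe_isContained_pathGraph_of_not_adj hab hHab).sPackingChromatic_le
      _ ≤ SPackingChromatic (pathGraph (n - 1)) s := hpath
      _ = SPackingChromatic ((cycleGraph n).induce {u | u ≠ a}) s :=
          (sPackingChromatic_cycleGraph_induce_ne hn a).symm
      _ < SPackingChromatic (cycleGraph n) s := h a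

end Cycle

lemma sVertexCritical_cycleGraph_two_pow {s : ℕ → ℕ} {k : ℕ} (hk : 1 ≤ k)
    (hs : ∀ i < k, 2 ^ i ≤ s i ∧ s i < 2 ^ (i + 1)) :
    SVertexCritical (cycleGraph (2 ^ k)) s := by
  have : NeZero (2 ^ k) := ⟨by positivity⟩
  intro v
  calc SPackingChromatic ((cycleGraph (2 ^ k)).induce {u | u ≠ v}) s
      = SPackingChromatic (pathGraph (2 ^ k - 1)) s :=
        sPackingChromatic_cycleGraph_induce_ne (Nat.le_self_pow (by omega) 2) v
    _ ≤ k := sPackingChromatic_pathGraph_le_of_lt_two_pow (fun i hi => (hs i hi).2)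
        (Nat.sub_lt (by positivity) one_pos)
    _ < SPackingChromatic (pathGraph (2 ^ k)) s :=
        lt_sPackingChromatic_pathGraph_two_pow fun i hi => (hs i hi).1
    _ ≤ SPackingChromatic (cycleGraph (2 ^ k)) s := sPackingChromatic_pathGraph_le_cycleGraph

end SimpleGraph

theorem stmt19_general (s : ℕ → ℕ)
    (h1 : s 0 = 1) (h2 : s 1 = 2 ∨ s 1 = 3)
    (h3 : 4 ≤ s 2 ∧ s 2 ≤ 7) (h4 : 4 ≤ s 3 ∧ s 3 ≤ 7)
    (n : ℕ) (hn : 3 ≤ n) :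
    SVertexCritical (cycleGraph n) s ↔
      (n = 4 ∨ n = 8 ∨ SCritical (cycleGraph n) s) := by
  have : NeZero n := ⟨by omega⟩
  have hs : ∀ i < 3, 2 ^ i ≤ s i ∧ s i < 2 ^ (i + 1) := by
    intro i hi
    interval_cases i <;> omega
  constructor
  · intro hvc
    by_cases hn4 : n = 4
    · exact .inl hn4
    by_cases hn8 : n = 8
    · exact .inr (.inl hn8)
    exact .inr (.inr (hvc.sCritical_cycleGraph (by omega)
      (sPackingChromatic_pathGraph_le_pred hs (by omega) hn hn4 hn8)))
  · rintro (rfl | rfl | hcrit)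
    · exact sVertexCritical_cycleGraph_two_pow (k := 2) (by norm_num) fun i hi => hs i (by omega)
    · exact sVertexCritical_cycleGraph_two_pow (k := 3) (by norm_num) hs
    · exact hcrit.sVertexCritical

theorem stmt19 (s : ℕ → ℕ) (hmono : Monotone s) (hpos : ∀ i, 1 ≤ s i)
    (h1 : s 0 = 1) (h2 : s 1 = 2 ∨ s 1 = 3)
    (h3 : 4 ≤ s 2 ∧ s 2 ≤ 7) (h4 : 4 ≤ s 3 ∧ s 3 ≤ 7)
    (n : ℕ) (hn : 3 ≤ n) :
    SVertexCritical (cycleGraph n) s ↔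
      (n = 4 ∨ n = 8 ∨ SCritical (cycleGraph n) s) :=
  stmt19_general s h1 h2 h3 h4 n hn
end
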